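/- arXiv:1808.03765 — 8 statements merged into one kernel-verified Lean document; each statement's English description precedes it below -/
import Mathlib

section
/- Let H be a separable complex Hilbert space, let m be a positive integer, and for each j = 1,…,m let {f_{ij}}_{i∈I} be a frame for H, and suppose these m families are woven frames for H with universal bounds A′, B′ > 0. If E : H → H is a bounded invertible linear operator, then the m families {E f_{ij}}_{i∈I}, j = 1,…,m, are woven frames for H with universal bounds A′·‖E⁻¹‖⁻² and B′·‖E‖². -/
/-!
Since `⟪f, E g⟫ = ⟪E† f, g⟫`, the woven sums of the families `E f_{ij}` at `f` are the woven sums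
of the families `f_{ij}` at `E† f`. The woven bounds at `E† f` then transfer to `f` through
`‖E† f‖ ≤ ‖E‖ ‖f‖` and `‖f‖ ≤ ‖E⁻¹‖ ‖E† f‖`, the latter because `(E⁻¹)†` is a left inverse of `E†`.
-/

open ContinuousLinearMap

namespace ContinuousLinearMap

variable {𝕜 E F : Type*} [NontriviallyNormedField 𝕜] [NormedAddCommGroup E] [NormedSpace 𝕜 E]
  [NormedAddCommGroup F] [NormedSpace 𝕜 F]

theorem sq_norm_apply_le (T : E →L[𝕜] F) (x : E) : ‖T x‖ ^ 2 ≤ ‖T‖ ^ 2 * ‖x‖ ^ 2 := by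
  rw [← mul_pow]
  exact pow_le_pow_left₀ (norm_nonneg _) (T.le_opNorm x) 2

/-- `(‖L‖²)⁻¹` is read as `0` when `L = 0`, so no invertibility of `‖L‖` is needed. -/
theorem inv_sq_norm_mul_sq_norm_le_of_leftInverse (T : E →L[𝕜] F) (L : F →L[𝕜] E)
    (hLT : Function.LeftInverse L T) (x : E) : (‖L‖ ^ 2)⁻¹ * ‖x‖ ^ 2 ≤ ‖T x‖ ^ 2 := by
  have hx : ‖x‖ ^ 2 ≤ ‖L‖ ^ 2 * ‖T x‖ ^ 2 := by
    simpa only [hLT x] using L.sq_norm_apply_le (T x)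
  exact inv_mul_le_of_le_mul₀ (by positivity) (by positivity) hx

end ContinuousLinearMap

section Adjoint

variable {𝕜 H K : Type*} [RCLike 𝕜] [NormedAddCommGroup H] [InnerProductSpace 𝕜 H] [CompleteSpace H]
  [NormedAddCommGroup K] [InnerProductSpace 𝕜 K] [CompleteSpace K]

theorem sum_tsum_norm_inner_map_sq {J I : Type*} [Fintype J] (T : H →L[𝕜] K) (F : J → I → H)
    (σ : J → Set I) (f : K) :
    ∑ j, ∑' i : σ j, ‖(inner 𝕜 f (T (F j (i : I))) : 𝕜)‖ ^ 2 =
      ∑ j, ∑' i : σ j, ‖(inner 𝕜 (adjoint T f) (F j (i : I)) : 𝕜)‖ ^ 2 := by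
  simp only [adjoint_inner_left]

theorem adjoint_symm_leftInverse_adjoint (E : H ≃L[𝕜] K) :
    Function.LeftInverse (adjoint (E.symm : K →L[𝕜] H)) (adjoint (E : H →L[𝕜] K)) := fun x => by
  rw [← comp_apply, ← adjoint_comp, E.coe_comp_coe_symm, adjoint_id, id_apply]

end Adjoint

theorem woven_frames_map_invertible_general
    {H : Type*} [NormedAddCommGroup H] [InnerProductSpace ℂ H] [CompleteSpace H]
    {I : Type*} {m : ℕ}
    (F : Fin m → I → H) (A' B' : ℝ) (hA' : 0 < A') (hB' : 0 < B')
    (hwoven : ∀ σ : Fin m → Set I, Pairwise (Function.onFun Disjoint σ) →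
      (⋃ j, σ j) = Set.univ → ∀ f : H,
      A' * ‖f‖ ^ 2 ≤ ∑ j : Fin m, ∑' i : σ j, ‖(inner ℂ f (F j (i : I)) : ℂ)‖ ^ 2 ∧
      ∑ j : Fin m, ∑' i : σ j, ‖(inner ℂ f (F j (i : I)) : ℂ)‖ ^ 2 ≤ B' * ‖f‖ ^ 2)
    (E : H ≃L[ℂ] H) :
    ∀ σ : Fin m → Set I, Pairwise (Function.onFun Disjoint σ) →
      (⋃ j, σ j) = Set.univ → ∀ f : H,
      (A' * (‖(E.symm : H →L[ℂ] H)‖ ^ 2)⁻¹) * ‖f‖ ^ 2 ≤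
        ∑ j : Fin m, ∑' i : σ j, ‖(inner ℂ f (E (F j (i : I))) : ℂ)‖ ^ 2 ∧
      ∑ j : Fin m, ∑' i : σ j, ‖(inner ℂ f (E (F j (i : I))) : ℂ)‖ ^ 2 ≤
        (B' * ‖(E : H →L[ℂ] H)‖ ^ 2) * ‖f‖ ^ 2 := by
  intro σ hσ hcov f
  set T := adjoint (E : H →L[ℂ] H)
  obtain ⟨hlower, hupper⟩ := hwoven σ hσ hcov (T f)
  have hTf_lower := inv_sq_norm_mul_sq_norm_le_of_leftInverse T _
    (adjoint_symm_leftInverse_adjoint E) f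
  rw [LinearIsometryEquiv.norm_map] at hTf_lower
  have hTf_upper := T.sq_norm_apply_le f
  rw [LinearIsometryEquiv.norm_map] at hTf_upper
  rw [← ContinuousLinearEquiv.coe_coe E, sum_tsum_norm_inner_map_sq]
  constructor
  · calc A' * (‖(E.symm : H →L[ℂ] H)‖ ^ 2)⁻¹ * ‖f‖ ^ 2
        = A' * ((‖(E.symm : H →L[ℂ] H)‖ ^ 2)⁻¹ * ‖f‖ ^ 2) := mul_assoc _ _ _
      _ ≤ A' * ‖T f‖ ^ 2 := by gcongr
      _ ≤ _ := hlower
  · calc _ ≤ B' * ‖T f‖ ^ 2 := hupper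
      _ ≤ B' * (‖(E : H →L[ℂ] H)‖ ^ 2 * ‖f‖ ^ 2) := by gcongr
      _ = _ := (mul_assoc _ _ _).symm

/-- If a finite collection of frames for a separable Hilbert space `H` is woven with
universal bounds `A'`, `B'`, and `E` is a bounded invertible operator on `H`, then the
images under `E` are woven frames with universal bounds `A'·‖E⁻¹‖⁻²` and `B'·‖E‖²`. -/
theorem woven_frames_map_invertible
    {H : Type*} [NormedAddCommGroup H] [InnerProductSpace ℂ H] [CompleteSpace H]
    [TopologicalSpace.SeparableSpace H]
    {I : Type*} [Countable I] {m : ℕ} (hm : 0 < m)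
    (F : Fin m → I → H) (A' B' : ℝ) (hA' : 0 < A') (hB' : 0 < B')
    (hframe : ∀ j : Fin m, ∃ A B : ℝ, 0 < A ∧ 0 < B ∧ ∀ f : H,
      A * ‖f‖ ^ 2 ≤ ∑' i : I, ‖(inner ℂ f (F j i) : ℂ)‖ ^ 2 ∧
        ∑' i : I, ‖(inner ℂ f (F j i) : ℂ)‖ ^ 2 ≤ B * ‖f‖ ^ 2)
    (hwoven : ∀ σ : Fin m → Set I, Pairwise (Function.onFun Disjoint σ) →
      (⋃ j, σ j) = Set.univ → ∀ f : H,
      A' * ‖f‖ ^ 2 ≤ ∑ j : Fin m, ∑' i : σ j, ‖(inner ℂ f (F j (i : I)) : ℂ)‖ ^ 2 ∧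
      ∑ j : Fin m, ∑' i : σ j, ‖(inner ℂ f (F j (i : I)) : ℂ)‖ ^ 2 ≤ B' * ‖f‖ ^ 2)
    (E : H ≃L[ℂ] H) :
    ∀ σ : Fin m → Set I, Pairwise (Function.onFun Disjoint σ) →
      (⋃ j, σ j) = Set.univ → ∀ f : H,
      (A' * (‖(E.symm : H →L[ℂ] H)‖ ^ 2)⁻¹) * ‖f‖ ^ 2 ≤
        ∑ j : Fin m, ∑' i : σ j, ‖(inner ℂ f (E (F j (i : I))) : ℂ)‖ ^ 2 ∧
      ∑ j : Fin m, ∑' i : σ j, ‖(inner ℂ f (E (F j (i : I))) : ℂ)‖ ^ 2 ≤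
        (B' * ‖(E : H →L[ℂ] H)‖ ^ 2) * ‖f‖ ^ 2 :=
  woven_frames_map_invertible_general F A' B' hA' hB' hwoven E
end

section
/- Let H be a separable complex Hilbert space. For each i ∈ I let {f_{i,j}}_{j∈J_i} be a frame for W_i = closure(span{f_{i,j}}_{j∈J_i}) with bounds A_{f_i}, B_{f_i}, let {g_{i,j}}_{j∈J_i} be a frame for V_i = closure(span{g_{i,j}}_{j∈J_i}) with bounds A_{g_i}, B_{g_i}, let ν_i, μ_i > 0, and assume 0 < inf_i A_{f_i}, sup_i B_{f_i} < ∞ and 0 < inf_i A_{g_i}, sup_i B_{g_i} < ∞. Then the following are equivalent: (a) there exist universal constants C, D > 0 such that for every σ ⊆ I and every f ∈ H, C‖f‖² ≤ Σ_{i∈σ} Σ_{j∈J_i} |⟨f, ν_i f_{i,j}⟩|² + Σ_{i∈σᶜ} Σ_{j∈J_i} |⟨f, μ_i g_{i,j}⟩|² ≤ D‖f‖² (i.e., {ν_i f_{i,j}} and {μ_i g_{i,j}} are woven frames for H); (b) {W_i}_{i∈I} with weights {ν_i} and {V_i}_{i∈I} with weights {μ_i} are woven fusion frames for H. -/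
/-!
If `{x_j}` is a frame of the closed subspace `K`, then `⟪f, x_j⟫ = ⟪P_K f, x_j⟫`, so the local
frame sum `∑_j |⟪f, c x_j⟫|²` lies between `a c² ‖P_K f‖²` and `b c² ‖P_K f‖²`. With uniform frame
bounds, the terms of the woven frame sums and of the woven fusion frame sums are therefore
comparable up to fixed positive factors, and such termwise comparable families of nonnegative
terms admit universal weaving bounds simultaneously.
-/

open scoped InnerProductSpace

section Weaving

variable {X I : Type*}

def WovenBounds (N : X → ℝ) (F G : X → I → ℝ) : Prop :=
  ∃ A B : ℝ, 0 < A ∧ 0 < B ∧ ∀ σ : Set I, ∀ x : X,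
    A * N x ≤ (∑' i : σ, F x i) + (∑' i : ↥σᶜ, G x i) ∧
      (∑' i : σ, F x i) + (∑' i : ↥σᶜ, G x i) ≤ B * N x

lemma summable_of_forall_tsum_add_tsum_compl_le {F G : I → ℝ} {c : ℝ} (hF : ∀ i, 0 ≤ F i)
    (hG : ∀ i, 0 ≤ G i) (h : ∀ σ : Set I, (∑' i : σ, F i) + (∑' i : ↥σᶜ, G i) ≤ c) :
    Summable F :=
  summable_of_sum_le (c := c) hF fun u => by
    have hu := h u
    rw [Finset.tsum_subtype' u F] at hu
    have hrest : 0 ≤ ∑' i : ↥(u : Set I)ᶜ, G i := tsum_nonneg fun i => hG i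
    linarith

lemma tsum_subtype_bounds_of_pointwise_bounds {P Q : I → ℝ} {m M : ℝ} (hm : 0 ≤ m)
    (hP : Summable P) (hP0 : ∀ i, 0 ≤ P i) (h : ∀ i, m * P i ≤ Q i ∧ Q i ≤ M * P i) (s : Set I) :
    m * ∑' i : s, P i ≤ ∑' i : s, Q i ∧ ∑' i : s, Q i ≤ M * ∑' i : s, P i := by
  have hPs : Summable fun i : s => P i := hP.subtype s
  have hQs : Summable fun i : s => Q i :=
    hPs.mul_left M |>.of_nonneg_of_le (fun i => (mul_nonneg hm (hP0 i)).trans (h i).1)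
      fun i => (h i).2
  rw [← tsum_mul_left, ← tsum_mul_left]
  exact ⟨(hPs.mul_left m).tsum_le_tsum (fun i => (h i).1) hQs,
    hQs.tsum_le_tsum (fun i => (h i).2) (hPs.mul_left M)⟩

lemma WovenBounds.of_pointwise_bounds {N : X → ℝ} {F G F' G' : X → I → ℝ} {m M : ℝ}
    (hm : 0 < m) (hM : 0 < M) (hF0 : ∀ x i, 0 ≤ F x i) (hG0 : ∀ x i, 0 ≤ G x i)
    (hF : ∀ x i, m * F x i ≤ F' x i ∧ F' x i ≤ M * F x i)
    (hG : ∀ x i, m * G x i ≤ G' x i ∧ G' x i ≤ M * G x i) (h : WovenBounds N F G) :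
    WovenBounds N F' G' := by
  obtain ⟨A, B, hA, hB, h⟩ := h
  refine ⟨m * A, M * B, mul_pos hm hA, mul_pos hM hB, fun σ x => ?_⟩
  -- A non-summable `tsum` is `0`, so summability has to be read off the upper bounds first.
  have hFs : Summable (F x) :=
    summable_of_forall_tsum_add_tsum_compl_le (hF0 x) (hG0 x) fun σ => (h σ x).2
  have hGs : Summable (G x) :=
    summable_of_forall_tsum_add_tsum_compl_le (hG0 x) (hF0 x) fun σ => by
      have hσ := (h σᶜ x).2
      rwa [compl_compl, add_comm] at hσ
  obtain ⟨hFlo, hFhi⟩ := tsum_subtype_bounds_of_pointwise_bounds hm.le hFs (hF0 x) (hF x) σ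
  obtain ⟨hGlo, hGhi⟩ := tsum_subtype_bounds_of_pointwise_bounds hm.le hGs (hG0 x) (hG x) σᶜ
  obtain ⟨hlo, hhi⟩ := h σ x
  have hlo' := mul_le_mul_of_nonneg_left hlo hm.le
  have hhi' := mul_le_mul_of_nonneg_left hhi hM.le
  constructor <;> linarith

theorem wovenBounds_iff_of_pointwise_bounds {N : X → ℝ} {F G F' G' : X → I → ℝ} {m M : ℝ}
    (hm : 0 < m) (hM : 0 < M) (hF0 : ∀ x i, 0 ≤ F x i) (hG0 : ∀ x i, 0 ≤ G x i)
    (hF : ∀ x i, m * F x i ≤ F' x i ∧ F' x i ≤ M * F x i)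
    (hG : ∀ x i, m * G x i ≤ G' x i ∧ G' x i ≤ M * G x i) :
    WovenBounds N F' G' ↔ WovenBounds N F G := by
  have inv_bounds : ∀ {P Q : X → I → ℝ}, (∀ x i, m * P x i ≤ Q x i ∧ Q x i ≤ M * P x i) →
      ∀ x i, M⁻¹ * Q x i ≤ P x i ∧ P x i ≤ m⁻¹ * Q x i := fun h x i =>
    ⟨(inv_mul_le_iff₀ hM).2 (h x i).2, (le_inv_mul_iff₀ hm).2 (h x i).1⟩
  refine ⟨WovenBounds.of_pointwise_bounds (inv_pos.2 hM) (inv_pos.2 hm) ?_ ?_ (inv_bounds hF)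
    (inv_bounds hG), WovenBounds.of_pointwise_bounds hm hM hF0 hG0 hF hG⟩
  · exact fun x i => (mul_nonneg hm.le (hF0 x i)).trans (hF x i).1
  · exact fun x i => (mul_nonneg hm.le (hG0 x i)).trans (hG x i).1

end Weaving

section Frames

variable {𝕜 E J : Type*} [RCLike 𝕜] [NormedAddCommGroup E] [InnerProductSpace 𝕜 E]

def IsFrameOf (K : Submodule 𝕜 E) (x : J → E) (a b : ℝ) : Prop :=
  ∀ g ∈ K, a * ‖g‖ ^ 2 ≤ ∑' j, ‖⟪g, x j⟫_𝕜‖ ^ 2 ∧ ∑' j, ‖⟪g, x j⟫_𝕜‖ ^ 2 ≤ b * ‖g‖ ^ 2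

lemma IsFrameOf.mono {K : Submodule 𝕜 E} {x : J → E} {a b a' b' : ℝ} (h : IsFrameOf K x a b)
    (ha : a' ≤ a) (hb : b ≤ b') : IsFrameOf K x a' b' := fun g hg =>
  ⟨(mul_le_mul_of_nonneg_right ha (sq_nonneg _)).trans (h g hg).1,
    (h g hg).2.trans (mul_le_mul_of_nonneg_right hb (sq_nonneg _))⟩

lemma tsum_norm_inner_smul_sq_eq {K : Submodule 𝕜 E} [K.HasOrthogonalProjection] {x : J → E}
    (hx : ∀ j, x j ∈ K) (c : 𝕜) (f : E) :
    ∑' j, ‖⟪f, c • x j⟫_𝕜‖ ^ 2 =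
      ‖c‖ ^ 2 * ∑' j, ‖⟪(K.orthogonalProjectionOnto f : E), x j⟫_𝕜‖ ^ 2 := by
  rw [← tsum_mul_left]
  congr 1 with j
  rw [inner_smul_right, norm_mul, mul_pow,
    ← K.inner_orthogonalProjectionOnto_eq_of_mem_right ⟨x j, hx j⟩ f, Submodule.coe_inner]

lemma IsFrameOf.bounds_orthogonalProjectionOnto {K : Submodule 𝕜 E} [K.HasOrthogonalProjection]
    {x : J → E} {a b : ℝ} (h : IsFrameOf K x a b) (hx : ∀ j, x j ∈ K) (c : 𝕜) (f : E) :
    a * (‖c‖ ^ 2 * ‖(K.orthogonalProjectionOnto f : E)‖ ^ 2) ≤ ∑' j, ‖⟪f, c • x j⟫_𝕜‖ ^ 2 ∧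
      ∑' j, ‖⟪f, c • x j⟫_𝕜‖ ^ 2 ≤ b * (‖c‖ ^ 2 * ‖(K.orthogonalProjectionOnto f : E)‖ ^ 2) := by
  obtain ⟨hlo, hhi⟩ := h _ (K.orthogonalProjectionOnto f).2
  rw [tsum_norm_inner_smul_sq_eq hx, mul_left_comm, mul_left_comm b]
  exact ⟨mul_le_mul_of_nonneg_left hlo (sq_nonneg _),
    mul_le_mul_of_nonneg_left hhi (sq_nonneg _)⟩

end Frames

theorem woven_frames_iff_woven_fusion_frames_general
    {H : Type*} [NormedAddCommGroup H] [InnerProductSpace ℂ H]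
    {I : Type*} {J : I → Type*}
    (fI gI : ∀ i, J i → H) (ν μ : I → ℝ)
    (W V : I → Submodule ℂ H) [∀ i, CompleteSpace (W i)] [∀ i, CompleteSpace (V i)]
    (hWdef : ∀ i, W i = (Submodule.span ℂ (Set.range (fI i))).topologicalClosure)
    (hVdef : ∀ i, V i = (Submodule.span ℂ (Set.range (gI i))).topologicalClosure)
    (Afi Bfi Agi Bgi : I → ℝ) (Af Bf Ag Bg : ℝ)
    (hframeW : ∀ i, ∀ g ∈ W i,
      Afi i * ‖g‖ ^ 2 ≤ ∑' j : J i, ‖(inner ℂ g (fI i j) : ℂ)‖ ^ 2 ∧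
        ∑' j : J i, ‖(inner ℂ g (fI i j) : ℂ)‖ ^ 2 ≤ Bfi i * ‖g‖ ^ 2)
    (hframeV : ∀ i, ∀ g ∈ V i,
      Agi i * ‖g‖ ^ 2 ≤ ∑' j : J i, ‖(inner ℂ g (gI i j) : ℂ)‖ ^ 2 ∧
        ∑' j : J i, ‖(inner ℂ g (gI i j) : ℂ)‖ ^ 2 ≤ Bgi i * ‖g‖ ^ 2)
    (hAf : 0 < Af) (hAfle : ∀ i, Af ≤ Afi i) (hBfle : ∀ i, Bfi i ≤ Bf)
    (hAg : 0 < Ag) (hAgle : ∀ i, Ag ≤ Agi i) (hBgle : ∀ i, Bgi i ≤ Bg) :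
    (∃ C D : ℝ, 0 < C ∧ 0 < D ∧ ∀ σ : Set I, ∀ f : H,
      C * ‖f‖ ^ 2 ≤
        (∑' i : σ, ∑' j : J (i : I), ‖(inner ℂ f ((ν (i : I) : ℂ) • fI (i : I) j) : ℂ)‖ ^ 2) +
          (∑' i : ↥σᶜ, ∑' j : J (i : I), ‖(inner ℂ f ((μ (i : I) : ℂ) • gI (i : I) j) : ℂ)‖ ^ 2) ∧
      (∑' i : σ, ∑' j : J (i : I), ‖(inner ℂ f ((ν (i : I) : ℂ) • fI (i : I) j) : ℂ)‖ ^ 2) +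
          (∑' i : ↥σᶜ, ∑' j : J (i : I), ‖(inner ℂ f ((μ (i : I) : ℂ) • gI (i : I) j) : ℂ)‖ ^ 2) ≤
        D * ‖f‖ ^ 2) ↔
    (∃ A B : ℝ, 0 < A ∧ 0 < B ∧ ∀ σ : Set I, ∀ f : H,
      A * ‖f‖ ^ 2 ≤
        (∑' i : σ, ν (i : I) ^ 2 * ‖(Submodule.orthogonalProjection (W (i : I)) f : H)‖ ^ 2) +
          (∑' i : ↥σᶜ, μ (i : I) ^ 2 * ‖(Submodule.orthogonalProjection (V (i : I)) f : H)‖ ^ 2) ∧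
      (∑' i : σ, ν (i : I) ^ 2 * ‖(Submodule.orthogonalProjection (W (i : I)) f : H)‖ ^ 2) +
          (∑' i : ↥σᶜ, μ (i : I) ^ 2 * ‖(Submodule.orthogonalProjection (V (i : I)) f : H)‖ ^ 2) ≤
        B * ‖f‖ ^ 2) := by
  set m := min Af Ag
  -- `Bf` and `Bg` need not be positive when `I` is empty.
  set M := max (max Bf Bg) 1
  have hfW : ∀ i, IsFrameOf (W i) (fI i) m M := fun i =>
    IsFrameOf.mono (hframeW i) ((min_le_left _ _).trans (hAfle i))
      ((hBfle i).trans ((le_max_left _ _).trans (le_max_left _ _)))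
  have hgV : ∀ i, IsFrameOf (V i) (gI i) m M := fun i =>
    IsFrameOf.mono (hframeV i) ((min_le_right _ _).trans (hAgle i))
      ((hBgle i).trans ((le_max_right _ _).trans (le_max_left _ _)))
  have hfW_mem : ∀ i j, fI i j ∈ W i := fun i j =>
    hWdef i ▸ Submodule.le_topologicalClosure _ (Submodule.subset_span ⟨j, rfl⟩)
  have hgV_mem : ∀ i j, gI i j ∈ V i := fun i j =>
    hVdef i ▸ Submodule.le_topologicalClosure _ (Submodule.subset_span ⟨j, rfl⟩)
  exact wovenBounds_iff_of_pointwise_bounds (N := fun f => ‖f‖ ^ 2)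
    (F := fun f i => ν i ^ 2 * ‖((W i).orthogonalProjectionOnto f : H)‖ ^ 2)
    (G := fun f i => μ i ^ 2 * ‖((V i).orthogonalProjectionOnto f : H)‖ ^ 2)
    (lt_min hAf hAg) (zero_lt_one.trans_le (le_max_right _ _))
    (fun _ _ => by positivity) (fun _ _ => by positivity)
    (fun f i => by
      simpa only [Complex.norm_real, Real.norm_eq_abs, sq_abs] using
        (hfW i).bounds_orthogonalProjectionOnto (hfW_mem i) (ν i : ℂ) f)
    (fun f i => by
      simpa only [Complex.norm_real, Real.norm_eq_abs, sq_abs] using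
        (hgV i).bounds_orthogonalProjectionOnto (hgV_mem i) (μ i : ℂ) f)

/-- The weighted local frames `{ν_i f_{i,j}}`, `{μ_i g_{i,j}}` are woven frames for `H`
iff the spanned subspaces `{W_i}`, `{V_i}` with weights `{ν_i}`, `{μ_i}` are woven
fusion frames for `H`. -/
theorem woven_frames_iff_woven_fusion_frames
    {H : Type*} [NormedAddCommGroup H] [InnerProductSpace ℂ H] [CompleteSpace H]
    [TopologicalSpace.SeparableSpace H]
    {I : Type*} [Countable I] {J : I → Type*} [∀ i, Countable (J i)]
    (fI gI : ∀ i, J i → H) (ν μ : I → ℝ) (hν : ∀ i, 0 < ν i) (hμ : ∀ i, 0 < μ i)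
    (W V : I → Submodule ℂ H) [∀ i, CompleteSpace (W i)] [∀ i, CompleteSpace (V i)]
    (hWdef : ∀ i, W i = (Submodule.span ℂ (Set.range (fI i))).topologicalClosure)
    (hVdef : ∀ i, V i = (Submodule.span ℂ (Set.range (gI i))).topologicalClosure)
    (Afi Bfi Agi Bgi : I → ℝ) (Af Bf Ag Bg : ℝ)
    (hframeW : ∀ i, ∀ g ∈ W i,
      Afi i * ‖g‖ ^ 2 ≤ ∑' j : J i, ‖(inner ℂ g (fI i j) : ℂ)‖ ^ 2 ∧
        ∑' j : J i, ‖(inner ℂ g (fI i j) : ℂ)‖ ^ 2 ≤ Bfi i * ‖g‖ ^ 2)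
    (hframeV : ∀ i, ∀ g ∈ V i,
      Agi i * ‖g‖ ^ 2 ≤ ∑' j : J i, ‖(inner ℂ g (gI i j) : ℂ)‖ ^ 2 ∧
        ∑' j : J i, ‖(inner ℂ g (gI i j) : ℂ)‖ ^ 2 ≤ Bgi i * ‖g‖ ^ 2)
    (hAf : 0 < Af) (hAfle : ∀ i, Af ≤ Afi i) (hBfle : ∀ i, Bfi i ≤ Bf)
    (hAg : 0 < Ag) (hAgle : ∀ i, Ag ≤ Agi i) (hBgle : ∀ i, Bgi i ≤ Bg) :
    (∃ C D : ℝ, 0 < C ∧ 0 < D ∧ ∀ σ : Set I, ∀ f : H,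
      C * ‖f‖ ^ 2 ≤
        (∑' i : σ, ∑' j : J (i : I), ‖(inner ℂ f ((ν (i : I) : ℂ) • fI (i : I) j) : ℂ)‖ ^ 2) +
          (∑' i : ↥σᶜ, ∑' j : J (i : I), ‖(inner ℂ f ((μ (i : I) : ℂ) • gI (i : I) j) : ℂ)‖ ^ 2) ∧
      (∑' i : σ, ∑' j : J (i : I), ‖(inner ℂ f ((ν (i : I) : ℂ) • fI (i : I) j) : ℂ)‖ ^ 2) +
          (∑' i : ↥σᶜ, ∑' j : J (i : I), ‖(inner ℂ f ((μ (i : I) : ℂ) • gI (i : I) j) : ℂ)‖ ^ 2) ≤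
        D * ‖f‖ ^ 2) ↔
    (∃ A B : ℝ, 0 < A ∧ 0 < B ∧ ∀ σ : Set I, ∀ f : H,
      A * ‖f‖ ^ 2 ≤
        (∑' i : σ, ν (i : I) ^ 2 * ‖(Submodule.orthogonalProjection (W (i : I)) f : H)‖ ^ 2) +
          (∑' i : ↥σᶜ, μ (i : I) ^ 2 * ‖(Submodule.orthogonalProjection (V (i : I)) f : H)‖ ^ 2) ∧
      (∑' i : σ, ν (i : I) ^ 2 * ‖(Submodule.orthogonalProjection (W (i : I)) f : H)‖ ^ 2) +
          (∑' i : ↥σᶜ, μ (i : I) ^ 2 * ‖(Submodule.orthogonalProjection (V (i : I)) f : H)‖ ^ 2) ≤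
        B * ‖f‖ ^ 2) :=
  woven_frames_iff_woven_fusion_frames_general fI gI ν μ W V hWdef hVdef Afi Bfi Agi Bgi Af Bf Ag Bg
    hframeW hframeV hAf hAfle hBfle hAg hAgle hBgle
end

section
/- Let H be a separable complex Hilbert space and let {W_i}_{i∈I} and {V_i}_{i∈I} be fusion frames for H with weights {ν_i} and {μ_i} respectively, which are woven fusion frames with some universal bounds. Let E : H → H be a bounded, self-adjoint, invertible linear operator such that E*E(W_i) ⊆ W_i and E*E(V_i) ⊆ V_i for every i ∈ I. Then the families {E W_i}_{i∈I} and {E V_i}_{i∈I} (each E W_i and E V_i is a closed subspace since E is invertible) are woven fusion frames for H with respect to the weights {ν_i} and {μ_i}. -/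
/-! Invariance of `W i` under `E*E` gives `P_{E W_i} = E P_{W_i} E⁻¹`: for `g = E⁻¹ f` and
`u ∈ W i`, `⟪f - E P g, E u⟫ = ⟪g - P g, E*E u⟫ = 0`. So each term of a woven sum of the images
at `E g` lies between `‖E⁻¹‖⁻²` and `‖E‖²` times the corresponding term at `g`, and `‖E g‖` is
comparable to `‖g‖` in the same way.

A non-summable `tsum` is `0` in Lean, so the comparison of sums needs summability; it comes from
the lower woven bound alone, taking `σ = univ` and `σ = ∅`. -/

open ContinuousLinearMap

section Sums

variable {ι : Type*}

noncomputable def wovenSum (a b : ι → ℝ) (σ : Set ι) : ℝ :=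
  (∑' i : σ, a i) + ∑' i : ↥σᶜ, b i

theorem wovenSum_univ (a b : ι → ℝ) : wovenSum a b Set.univ = ∑' i, a i := by
  simp [wovenSum, tsum_subtype]

theorem wovenSum_empty (a b : ι → ℝ) : wovenSum a b ∅ = ∑' i, b i := by
  simp [wovenSum, tsum_subtype]

theorem tsum_subtype_le_mul_tsum_subtype {a a' : ι → ℝ} {k : ℝ} (ha : ∀ i, 0 ≤ a i)
    (ha' : Summable a') (hak : ∀ i, a i ≤ k * a' i) (s : Set ι) :
    ∑' i : s, a i ≤ k * ∑' i : s, a' i := by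
  rw [← tsum_mul_left]
  have hka' := ha'.mul_left k
  exact ((hka'.of_nonneg_of_le ha hak).subtype s).tsum_le_tsum (fun i => hak i) (hka'.subtype s)

theorem wovenSum_le_mul_wovenSum {a b a' b' : ι → ℝ} {k : ℝ} (ha : ∀ i, 0 ≤ a i)
    (hb : ∀ i, 0 ≤ b i) (ha' : Summable a') (hb' : Summable b') (hak : ∀ i, a i ≤ k * a' i)
    (hbk : ∀ i, b i ≤ k * b' i) (σ : Set ι) :
    wovenSum a b σ ≤ k * wovenSum a' b' σ := by
  rw [wovenSum, wovenSum, mul_add]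
  exact add_le_add (tsum_subtype_le_mul_tsum_subtype ha ha' hak σ)
    (tsum_subtype_le_mul_tsum_subtype hb hb' hbk σᶜ)

end Sums

section Hilbert

variable {𝕜 H H' : Type*} [RCLike 𝕜]
  [NormedAddCommGroup H] [InnerProductSpace 𝕜 H] [CompleteSpace H]
  [NormedAddCommGroup H'] [InnerProductSpace 𝕜 H'] [CompleteSpace H']

theorem starProjection_map_of_adjoint_comp_le (E : H ≃L[𝕜] H') (K : Submodule 𝕜 H)
    [K.HasOrthogonalProjection]
    [(K.map ((E : H →L[𝕜] H') : H →ₗ[𝕜] H')).HasOrthogonalProjection]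
    (hK : K.map ((adjoint (E : H →L[𝕜] H') ∘L (E : H →L[𝕜] H')) : H →ₗ[𝕜] H) ≤ K) (f : H') :
    (K.map ((E : H →L[𝕜] H') : H →ₗ[𝕜] H')).starProjection f =
      E (K.starProjection (E.symm f)) := by
  apply Submodule.eq_starProjection_of_mem_of_inner_eq_zero
  · exact Submodule.mem_map_of_mem (K.starProjection_apply_mem _)
  rintro _ ⟨u, hu, rfl⟩
  have hEEu : adjoint (E : H →L[𝕜] H') (E u) ∈ K := hK ⟨u, hu, rfl⟩
  calc inner 𝕜 (f - E (K.starProjection (E.symm f))) (E u)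
      = inner 𝕜 (E.symm f - K.starProjection (E.symm f))
          (adjoint (E : H →L[𝕜] H') (E u)) := by
        rw [adjoint_inner_right, map_sub]; simp
    _ = 0 := K.starProjection_inner_eq_zero _ _ hEEu

end Hilbert

section FusionFrame

variable {𝕜 H H' ι : Type*} [RCLike 𝕜]
  [NormedAddCommGroup H] [InnerProductSpace 𝕜 H]
  [NormedAddCommGroup H'] [InnerProductSpace 𝕜 H']

noncomputable def fusionTerm (W : ι → Submodule 𝕜 H) [∀ i, (W i).HasOrthogonalProjection]
    (ν : ι → ℝ) (f : H) (i : ι) : ℝ :=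
  ν i ^ 2 * ‖(Submodule.orthogonalProjectionOnto (W i) f : H)‖ ^ 2

def IsWovenFusionFrame (W V : ι → Submodule 𝕜 H) [∀ i, (W i).HasOrthogonalProjection]
    [∀ i, (V i).HasOrthogonalProjection] (ν μ : ι → ℝ) (A B : ℝ) : Prop :=
  ∀ σ : Set ι, ∀ f : H,
    A * ‖f‖ ^ 2 ≤ wovenSum (fusionTerm W ν f) (fusionTerm V μ f) σ ∧
      wovenSum (fusionTerm W ν f) (fusionTerm V μ f) σ ≤ B * ‖f‖ ^ 2

variable {W V : ι → Submodule 𝕜 H} [∀ i, (W i).HasOrthogonalProjection]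
  [∀ i, (V i).HasOrthogonalProjection] {ν μ : ι → ℝ}

theorem fusionTerm_nonneg (f : H) (i : ι) : 0 ≤ fusionTerm W ν f i := by
  unfold fusionTerm; positivity

theorem summable_fusionTerm_of_le_tsum {C : ℝ} (hC : 0 < C) {g : H}
    (h : C * ‖g‖ ^ 2 ≤ ∑' i, fusionTerm W ν g i) : Summable (fusionTerm W ν g) := by
  by_contra hns
  rw [tsum_eq_zero_of_not_summable hns] at h
  have hg : g = 0 := by
    by_contra hg
    have : 0 < C * ‖g‖ ^ 2 := by positivity
    linarith
  subst hg
  exact hns <| summable_zero.congr fun i => by simp [fusionTerm]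

theorem IsWovenFusionFrame.summable_left {A B : ℝ} (h : IsWovenFusionFrame W V ν μ A B)
    (hA : 0 < A) (g : H) : Summable (fusionTerm W ν g) :=
  summable_fusionTerm_of_le_tsum hA (by simpa only [wovenSum_univ] using (h Set.univ g).1)

theorem IsWovenFusionFrame.summable_right {A B : ℝ} (h : IsWovenFusionFrame W V ν μ A B)
    (hA : 0 < A) (g : H) : Summable (fusionTerm V μ g) :=
  summable_fusionTerm_of_le_tsum hA (by simpa only [wovenSum_empty] using (h ∅ g).1)

variable [CompleteSpace H] [CompleteSpace H'] (E : H ≃L[𝕜] H')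
  [∀ i, ((W i).map ((E : H →L[𝕜] H') : H →ₗ[𝕜] H')).HasOrthogonalProjection]

theorem fusionTerm_map
    (hW : ∀ i, (W i).map
      ((adjoint (E : H →L[𝕜] H') ∘L (E : H →L[𝕜] H')) : H →ₗ[𝕜] H) ≤ W i)
    (g : H) (i : ι) :
    fusionTerm (fun i => (W i).map ((E : H →L[𝕜] H') : H →ₗ[𝕜] H')) ν (E g) i =
      ν i ^ 2 * ‖E ((W i).starProjection g)‖ ^ 2 := by
  rw [fusionTerm, Submodule.coe_orthogonalProjectionOnto_apply,
    starProjection_map_of_adjoint_comp_le E (W i) (hW i), E.symm_apply_apply]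

theorem fusionTerm_map_le
    (hW : ∀ i, (W i).map
      ((adjoint (E : H →L[𝕜] H') ∘L (E : H →L[𝕜] H')) : H →ₗ[𝕜] H) ≤ W i)
    {c : ℝ} (hc : ∀ x, ‖E x‖ ≤ c * ‖x‖) (g : H) (i : ι) :
    fusionTerm (fun i => (W i).map ((E : H →L[𝕜] H') : H →ₗ[𝕜] H')) ν (E g) i ≤
      c ^ 2 * fusionTerm W ν g i := by
  rw [fusionTerm_map E hW, fusionTerm, Submodule.coe_orthogonalProjectionOnto_apply]
  calc ν i ^ 2 * ‖E ((W i).starProjection g)‖ ^ 2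
      ≤ ν i ^ 2 * (c * ‖(W i).starProjection g‖) ^ 2 := by gcongr; exact hc _
    _ = c ^ 2 * (ν i ^ 2 * ‖(W i).starProjection g‖ ^ 2) := by ring

theorem fusionTerm_le_map
    (hW : ∀ i, (W i).map
      ((adjoint (E : H →L[𝕜] H') ∘L (E : H →L[𝕜] H')) : H →ₗ[𝕜] H) ≤ W i)
    {d : ℝ} (hd : ∀ x, ‖x‖ ≤ d * ‖E x‖) (g : H) (i : ι) :
    fusionTerm W ν g i ≤
      d ^ 2 * fusionTerm (fun i => (W i).map ((E : H →L[𝕜] H') : H →ₗ[𝕜] H')) ν (E g) i := by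
  rw [fusionTerm_map E hW, fusionTerm, Submodule.coe_orthogonalProjectionOnto_apply]
  calc ν i ^ 2 * ‖(W i).starProjection g‖ ^ 2
      ≤ ν i ^ 2 * (d * ‖E ((W i).starProjection g)‖) ^ 2 := by gcongr; exact hd _
    _ = d ^ 2 * (ν i ^ 2 * ‖E ((W i).starProjection g)‖ ^ 2) := by ring

variable [∀ i, ((V i).map ((E : H →L[𝕜] H') : H →ₗ[𝕜] H')).HasOrthogonalProjection]

theorem IsWovenFusionFrame.map {A B : ℝ} (h : IsWovenFusionFrame W V ν μ A B) (hA : 0 < A)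
    (hB : 0 ≤ B)
    (hW : ∀ i, (W i).map
      ((adjoint (E : H →L[𝕜] H') ∘L (E : H →L[𝕜] H')) : H →ₗ[𝕜] H) ≤ W i)
    (hV : ∀ i, (V i).map
      ((adjoint (E : H →L[𝕜] H') ∘L (E : H →L[𝕜] H')) : H →ₗ[𝕜] H) ≤ V i)
    {c d : ℝ} (hc0 : 0 < c) (hd0 : 0 < d) (hc : ∀ x, ‖E x‖ ≤ c * ‖x‖)
    (hd : ∀ x, ‖x‖ ≤ d * ‖E x‖) :
    IsWovenFusionFrame (fun i => (W i).map ((E : H →L[𝕜] H') : H →ₗ[𝕜] H'))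
      (fun i => (V i).map ((E : H →L[𝕜] H') : H →ₗ[𝕜] H'))
      ν μ (A / (c ^ 2 * d ^ 2)) (B * (c ^ 2 * d ^ 2)) := by
  intro σ f
  obtain ⟨g, rfl⟩ := E.surjective f
  obtain ⟨hlow, hup⟩ := h σ g
  have hWsum := h.summable_left hA g
  have hVsum := h.summable_right hA g
  have hWsum' := (hWsum.mul_left (c ^ 2)).of_nonneg_of_le (fusionTerm_nonneg (E g))
    (fusionTerm_map_le E hW hc g)
  have hVsum' := (hVsum.mul_left (c ^ 2)).of_nonneg_of_le (fusionTerm_nonneg (E g))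
    (fusionTerm_map_le E hV hc g)
  have hmap_le := wovenSum_le_mul_wovenSum (fusionTerm_nonneg (E g)) (fusionTerm_nonneg (E g))
    hWsum hVsum (fusionTerm_map_le E hW hc g) (fusionTerm_map_le E hV hc g) σ
  have hle_map := wovenSum_le_mul_wovenSum (fusionTerm_nonneg g) (fusionTerm_nonneg g)
    hWsum' hVsum' (fusionTerm_le_map E hW hd g) (fusionTerm_le_map E hV hd g) σ
  have hEg : ‖E g‖ ^ 2 ≤ c ^ 2 * ‖g‖ ^ 2 := by
    rw [← mul_pow]; exact pow_le_pow_left₀ (norm_nonneg _) (hc g) 2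
  have hg : ‖g‖ ^ 2 ≤ d ^ 2 * ‖E g‖ ^ 2 := by
    rw [← mul_pow]; exact pow_le_pow_left₀ (norm_nonneg _) (hd g) 2
  set S' := wovenSum
    (fusionTerm (fun i => (W i).map ((E : H →L[𝕜] H') : H →ₗ[𝕜] H')) ν (E g))
    (fusionTerm (fun i => (V i).map ((E : H →L[𝕜] H') : H →ₗ[𝕜] H')) μ (E g)) σ
  constructor
  · rw [div_mul_eq_mul_div, div_le_iff₀ (by positivity)]
    calc A * ‖E g‖ ^ 2 ≤ A * (c ^ 2 * ‖g‖ ^ 2) := by gcongr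
      _ = c ^ 2 * (A * ‖g‖ ^ 2) := by ring
      _ ≤ c ^ 2 * (d ^ 2 * S') :=
        mul_le_mul_of_nonneg_left (hlow.trans hle_map) (by positivity)
      _ = S' * (c ^ 2 * d ^ 2) := by ring
  · calc S' ≤ c ^ 2 * (B * ‖g‖ ^ 2) := hmap_le.trans (by gcongr)
      _ ≤ c ^ 2 * (B * (d ^ 2 * ‖E g‖ ^ 2)) := by gcongr
      _ = B * (c ^ 2 * d ^ 2) * ‖E g‖ ^ 2 := by ring

end FusionFrame

theorem woven_fusion_frames_map_selfAdjoint_invertible_general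
    {H : Type*} [NormedAddCommGroup H] [InnerProductSpace ℂ H] [CompleteSpace H]
    {I : Type*}
    (W V : I → Submodule ℂ H) [∀ i, CompleteSpace (W i)] [∀ i, CompleteSpace (V i)]
    (ν μ : I → ℝ)
    (A B : ℝ) (hA : 0 < A) (hB : 0 < B)
    (hwoven : ∀ σ : Set I, ∀ f : H,
      A * ‖f‖ ^ 2 ≤
        (∑' i : σ, ν (i : I) ^ 2 * ‖(Submodule.orthogonalProjectionOnto (W (i : I)) f : H)‖ ^ 2) +
          (∑' i : ↥σᶜ, μ (i : I) ^ 2 * ‖(Submodule.orthogonalProjectionOnto (V (i : I)) f : H)‖ ^ 2) ∧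
      (∑' i : σ, ν (i : I) ^ 2 * ‖(Submodule.orthogonalProjectionOnto (W (i : I)) f : H)‖ ^ 2) +
          (∑' i : ↥σᶜ, μ (i : I) ^ 2 * ‖(Submodule.orthogonalProjectionOnto (V (i : I)) f : H)‖ ^ 2) ≤
        B * ‖f‖ ^ 2)
    (E : H ≃L[ℂ] H)
    (hEEW : ∀ i, Submodule.map
      (((ContinuousLinearMap.adjoint (E : H →L[ℂ] H)) ∘L (E : H →L[ℂ] H)) : H →ₗ[ℂ] H)
      (W i) ≤ W i)
    (hEEV : ∀ i, Submodule.map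
      (((ContinuousLinearMap.adjoint (E : H →L[ℂ] H)) ∘L (E : H →L[ℂ] H)) : H →ₗ[ℂ] H)
      (V i) ≤ V i)
    [∀ i, CompleteSpace (Submodule.map ((E : H →L[ℂ] H) : H →ₗ[ℂ] H) (W i))]
    [∀ i, CompleteSpace (Submodule.map ((E : H →L[ℂ] H) : H →ₗ[ℂ] H) (V i))] :
    ∃ A' B' : ℝ, 0 < A' ∧ 0 < B' ∧ ∀ σ : Set I, ∀ f : H,
      A' * ‖f‖ ^ 2 ≤
        (∑' i : σ, ν (i : I) ^ 2 *
          ‖(Submodule.orthogonalProjectionOnto (Submodule.map ((E : H →L[ℂ] H) : H →ₗ[ℂ] H) (W (i : I))) f : H)‖ ^ 2) +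
          (∑' i : ↥σᶜ, μ (i : I) ^ 2 *
            ‖(Submodule.orthogonalProjectionOnto (Submodule.map ((E : H →L[ℂ] H) : H →ₗ[ℂ] H) (V (i : I))) f : H)‖ ^ 2) ∧
      (∑' i : σ, ν (i : I) ^ 2 *
          ‖(Submodule.orthogonalProjectionOnto (Submodule.map ((E : H →L[ℂ] H) : H →ₗ[ℂ] H) (W (i : I))) f : H)‖ ^ 2) +
          (∑' i : ↥σᶜ, μ (i : I) ^ 2 *
            ‖(Submodule.orthogonalProjectionOnto (Submodule.map ((E : H →L[ℂ] H) : H →ₗ[ℂ] H) (V (i : I))) f : H)‖ ^ 2) ≤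
        B' * ‖f‖ ^ 2 := by
  obtain ⟨c, hc0, hc⟩ := (E : H →L[ℂ] H).bound
  obtain ⟨d, hd0, hd⟩ := (E.symm : H →L[ℂ] H).bound
  have hd' : ∀ x, ‖x‖ ≤ d * ‖E x‖ := fun x => by simpa using hd (E x)
  exact ⟨_, _, by positivity, by positivity,
    IsWovenFusionFrame.map E hwoven hA hB.le hEEW hEEV hc0 hd0 hc hd'⟩

/-- Woven fusion frames are preserved by a bounded self-adjoint invertible operator `E`
such that `E*E` leaves each subspace invariant. -/
theorem woven_fusion_frames_map_selfAdjoint_invertible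
    {H : Type*} [NormedAddCommGroup H] [InnerProductSpace ℂ H] [CompleteSpace H]
    [TopologicalSpace.SeparableSpace H]
    {I : Type*} [Countable I]
    (W V : I → Submodule ℂ H) [∀ i, CompleteSpace (W i)] [∀ i, CompleteSpace (V i)]
    (ν μ : I → ℝ) (hν : ∀ i, 0 < ν i) (hμ : ∀ i, 0 < μ i)
    (CW DW CV DV : ℝ) (hCW : 0 < CW) (hDW : 0 < DW) (hCV : 0 < CV) (hDV : 0 < DV)
    (hW : ∀ f : H,
      CW * ‖f‖ ^ 2 ≤ ∑' i : I, ν i ^ 2 * ‖(Submodule.orthogonalProjectionOnto (W i) f : H)‖ ^ 2 ∧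
      ∑' i : I, ν i ^ 2 * ‖(Submodule.orthogonalProjectionOnto (W i) f : H)‖ ^ 2 ≤ DW * ‖f‖ ^ 2)
    (hV : ∀ f : H,
      CV * ‖f‖ ^ 2 ≤ ∑' i : I, μ i ^ 2 * ‖(Submodule.orthogonalProjectionOnto (V i) f : H)‖ ^ 2 ∧
      ∑' i : I, μ i ^ 2 * ‖(Submodule.orthogonalProjectionOnto (V i) f : H)‖ ^ 2 ≤ DV * ‖f‖ ^ 2)
    (A B : ℝ) (hA : 0 < A) (hB : 0 < B)
    (hwoven : ∀ σ : Set I, ∀ f : H,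
      A * ‖f‖ ^ 2 ≤
        (∑' i : σ, ν (i : I) ^ 2 * ‖(Submodule.orthogonalProjectionOnto (W (i : I)) f : H)‖ ^ 2) +
          (∑' i : ↥σᶜ, μ (i : I) ^ 2 * ‖(Submodule.orthogonalProjectionOnto (V (i : I)) f : H)‖ ^ 2) ∧
      (∑' i : σ, ν (i : I) ^ 2 * ‖(Submodule.orthogonalProjectionOnto (W (i : I)) f : H)‖ ^ 2) +
          (∑' i : ↥σᶜ, μ (i : I) ^ 2 * ‖(Submodule.orthogonalProjectionOnto (V (i : I)) f : H)‖ ^ 2) ≤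
        B * ‖f‖ ^ 2)
    (E : H ≃L[ℂ] H) (hEsa : IsSelfAdjoint (E : H →L[ℂ] H))
    (hEEW : ∀ i, Submodule.map
      (((ContinuousLinearMap.adjoint (E : H →L[ℂ] H)) ∘L (E : H →L[ℂ] H)) : H →ₗ[ℂ] H)
      (W i) ≤ W i)
    (hEEV : ∀ i, Submodule.map
      (((ContinuousLinearMap.adjoint (E : H →L[ℂ] H)) ∘L (E : H →L[ℂ] H)) : H →ₗ[ℂ] H)
      (V i) ≤ V i)
    [∀ i, CompleteSpace (Submodule.map ((E : H →L[ℂ] H) : H →ₗ[ℂ] H) (W i))]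
    [∀ i, CompleteSpace (Submodule.map ((E : H →L[ℂ] H) : H →ₗ[ℂ] H) (V i))] :
    ∃ A' B' : ℝ, 0 < A' ∧ 0 < B' ∧ ∀ σ : Set I, ∀ f : H,
      A' * ‖f‖ ^ 2 ≤
        (∑' i : σ, ν (i : I) ^ 2 *
          ‖(Submodule.orthogonalProjectionOnto (Submodule.map ((E : H →L[ℂ] H) : H →ₗ[ℂ] H) (W (i : I))) f : H)‖ ^ 2) +
          (∑' i : ↥σᶜ, μ (i : I) ^ 2 *
            ‖(Submodule.orthogonalProjectionOnto (Submodule.map ((E : H →L[ℂ] H) : H →ₗ[ℂ] H) (V (i : I))) f : H)‖ ^ 2) ∧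
      (∑' i : σ, ν (i : I) ^ 2 *
          ‖(Submodule.orthogonalProjectionOnto (Submodule.map ((E : H →L[ℂ] H) : H →ₗ[ℂ] H) (W (i : I))) f : H)‖ ^ 2) +
          (∑' i : ↥σᶜ, μ (i : I) ^ 2 *
            ‖(Submodule.orthogonalProjectionOnto (Submodule.map ((E : H →L[ℂ] H) : H →ₗ[ℂ] H) (V (i : I))) f : H)‖ ^ 2) ≤
        B' * ‖f‖ ^ 2 :=
  woven_fusion_frames_map_selfAdjoint_invertible_general W V ν μ A B hA hB hwoven E hEEW hEEV
end

section
/- Let H be a separable complex Hilbert space and let {W_i}_{i∈I} and {V_i}_{i∈I} be fusion frames for H with weights {ν_i} and {μ_i} respectively. Suppose that for every pair of disjoint finite subsets I₀, J₀ ⊆ I and every ε > 0 there exist disjoint subsets σ, δ ⊆ I ∖ (I₀ ∪ J₀) with σ ∪ δ = I ∖ (I₀ ∪ J₀) such that some unit vector f ∈ H satisfies Σ_{i∈I₀∪σ} ν_i² ‖P_{W_i} f‖² + Σ_{i∈J₀∪δ} μ_i² ‖P_{V_i} f‖² < ε. Then there exists a subset M ⊆ I such that the weaving {W_i}_{i∈M}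 ∪ {V_i}_{i∈Mᶜ} has no positive lower fusion frame bound, i.e., inf over unit vectors f ∈ H of Σ_{i∈M} ν_i² ‖P_{W_i} f‖² + Σ_{i∈Mᶜ} μ_i² ‖P_{V_i} f‖² equals 0. In particular, {W_i}_{i∈I} and {V_i}_{i∈I} are not woven fusion frames. -/
/-!
Encode a weaving by its indicator `g : I → Bool`; the space `I → Bool` is compact Hausdorff,
hence a Baire space. For a unit vector `f` the two fusion frame series are summable (the positive
lower frame bounds rule out the junk value `∑' = 0`), so the weaving sum of `f` depends, up to
an arbitrarily small tail, only on finitely many coordinates of `g`. Hence for each `n` the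
weavings admitting a unit vector with weaving sum `< 1/(n+1)` form an open set, and the
hypothesis on finite index sets says exactly that this set meets every cylinder, i.e. is dense.
By Baire's theorem some weaving lies in all of them.
-/

open Set Filter Topology

theorem Pi.dense_of_forall_exists_eqOn_finset {ι : Type*} {α : ι → Type*}
    [∀ i, TopologicalSpace (α i)] {s : Set (∀ i, α i)}
    (h : ∀ (x : ∀ i, α i) (F : Finset ι), ∃ y ∈ s, ∀ i ∈ F, y i = x i) : Dense s := by
  refine fun x => mem_closure_iff_nhds.2 fun t ht => ?_
  obtain ⟨F, u, hu, hut⟩ := mem_pi'.1 (nhds_pi (a := x) ▸ ht)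
  obtain ⟨y, hys, hy⟩ := h x F
  exact ⟨y, hut fun i hi => hy i hi ▸ mem_of_mem_nhds (hu i), hys⟩

theorem Pi.eventually_eqOn_finset_nhds {ι : Type*} {α : ι → Type*} [∀ i, TopologicalSpace (α i)]
    [∀ i, DiscreteTopology (α i)] (x : ∀ i, α i) (F : Finset ι) :
    ∀ᶠ y in 𝓝 x, ∀ i ∈ F, y i = x i :=
  (eventually_all_finset F).2 fun i _ =>
    tendsto_pure.1 (nhds_discrete (α i) ▸ (continuous_apply i).tendsto x)

theorem Set.compl_union_eq_union_of_union_eq_compl {α : Type*} {s t σ δ : Set α}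
    (hst : Disjoint s t) (hσδ : Disjoint σ δ) (h : σ ∪ δ = (s ∪ t)ᶜ) : (s ∪ σ)ᶜ = t ∪ δ := by
  ext x
  have hx := congrArg (x ∈ ·) h
  have : x ∈ s → x ∉ t := fun h => disjoint_left.1 hst h
  have : x ∈ σ → x ∉ δ := fun h => disjoint_left.1 hσδ h
  simp only [mem_union, mem_compl_iff, eq_iff_iff] at hx ⊢
  tauto

theorem summable_of_tsum_ne_zero {ι : Type*} {g : ι → ℝ} (h : ∑' i, g i ≠ 0) : Summable g :=
  not_not.1 fun hns => h (tsum_eq_zero_of_not_summable hns)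

section Weaving

variable {I : Type*}

noncomputable def weavingSum (a b : I → ℝ) (M : Set I) : ℝ :=
  ∑' i : M, a i + ∑' i : ↥Mᶜ, b i

theorem weavingSum_nonneg {a b : I → ℝ} (ha : 0 ≤ a) (hb : 0 ≤ b) (M : Set I) :
    0 ≤ weavingSum a b M :=
  add_nonneg (tsum_nonneg fun i => ha i) (tsum_nonneg fun i => hb i)

theorem weavingSum_eq_tsum_indicator {a b : I → ℝ} (ha : Summable a) (hb : Summable b)
    (M : Set I) : weavingSum a b M = ∑' i, (M.indicator a i + Mᶜ.indicator b i) := by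
  rw [weavingSum, tsum_subtype, tsum_subtype, (ha.indicator M).tsum_add (hb.indicator Mᶜ)]

theorem weavingSum_le_add_tsum_compl {a b : I → ℝ} (ha : 0 ≤ a) (hb : 0 ≤ b)
    (hsa : Summable a) (hsb : Summable b) {M N : Set I} {F : Finset I}
    (hMN : ∀ i ∈ F, i ∈ M ↔ i ∈ N) :
    weavingSum a b M ≤ weavingSum a b N + ∑' i : {i // i ∉ F}, (a i + b i) := by
  have htail : ∑' i : {i // i ∉ F}, (a i + b i) =
      ∑' i, (↑F : Set I)ᶜ.indicator (fun i => a i + b i) i :=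
    tsum_subtype (↑F : Set I)ᶜ fun i => a i + b i
  have hsN := (hsa.indicator N).add (hsb.indicator Nᶜ)
  rw [htail, weavingSum_eq_tsum_indicator hsa hsb, weavingSum_eq_tsum_indicator hsa hsb,
    ← hsN.tsum_add ((hsa.add hsb).indicator _)]
  refine ((hsa.indicator M).add (hsb.indicator Mᶜ)).tsum_le_tsum (fun i => ?_)
    (hsN.add ((hsa.add hsb).indicator _))
  have : 0 ≤ a i := ha i
  have : 0 ≤ b i := hb i
  by_cases hF : i ∈ F
  · have := hMN i hF
    by_cases hM : i ∈ M <;> simp_all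
  · by_cases hM : i ∈ M <;> by_cases hN : i ∈ N <;>
      simp only [hF, hM, hN, mem_compl_iff, SetLike.mem_coe, not_true_eq_false, not_false_eq_true,
        indicator_of_mem, indicator_of_notMem, add_zero, zero_add] <;> linarith

theorem isOpen_setOf_weavingSum_lt {a b : I → ℝ} (ha : 0 ≤ a) (hb : 0 ≤ b)
    (hsa : Summable a) (hsb : Summable b) (ε : ℝ) :
    IsOpen {g : I → Bool | weavingSum a b {i | g i} < ε} := by
  refine isOpen_iff_mem_nhds.2 fun g₀ hg₀ => ?_
  obtain ⟨F, hF⟩ := ((tendsto_tsum_compl_atTop_zero (a + b)).eventually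
    (gt_mem_nhds (sub_pos.2 hg₀))).exists
  filter_upwards [Pi.eventually_eqOn_finset_nhds g₀ F] with g hg
  calc weavingSum a b {i | g i}
      ≤ weavingSum a b {i | g₀ i} + ∑' i : {i // i ∉ F}, (a i + b i) :=
        weavingSum_le_add_tsum_compl ha hb hsa hsb fun i hi => by simp [hg i hi]
    _ < ε := by simp only [Pi.add_apply] at hF; linarith

variable {X : Type*} (a b : X → I → ℝ)

/-- `hsmall` is the hypothesis of the theorem, with `N = I₀ ∪ σ` (so that `Nᶜ = J₀ ∪ δ`). -/
theorem dense_setOf_exists_weavingSum_lt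
    (hsmall : ∀ A B : Finset I, Disjoint A B → ∀ ε : ℝ, 0 < ε →
      ∃ N : Set I, ↑A ⊆ N ∧ Disjoint N ↑B ∧ ∃ x, weavingSum (a x) (b x) N < ε)
    {ε : ℝ} (hε : 0 < ε) :
    Dense {g : I → Bool | ∃ x, weavingSum (a x) (b x) {i | g i} < ε} := by
  classical
  refine Pi.dense_of_forall_exists_eqOn_finset fun g₀ F => ?_
  have hdisj : Disjoint (F.filter (g₀ · = true)) (F.filter (g₀ · = false)) :=
    Finset.disjoint_filter.2 fun i _ h => by simp [h]
  obtain ⟨N, hAN, hNB, x, hx⟩ := hsmall _ _ hdisj ε hε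
  refine ⟨fun i => decide (i ∈ N), ⟨x, by simpa using hx⟩, fun i hi => ?_⟩
  cases h : g₀ i
  · exact decide_eq_false fun hiN => disjoint_left.1 hNB hiN (by simp [hi, h])
  · exact decide_eq_true (hAN (by simp [hi, h]))

theorem exists_forall_exists_weavingSum_lt (ha : ∀ x, 0 ≤ a x) (hb : ∀ x, 0 ≤ b x)
    (hsa : ∀ x, Summable (a x)) (hsb : ∀ x, Summable (b x))
    (hsmall : ∀ A B : Finset I, Disjoint A B → ∀ ε : ℝ, 0 < ε →
      ∃ N : Set I, ↑A ⊆ N ∧ Disjoint N ↑B ∧ ∃ x, weavingSum (a x) (b x) N < ε) :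
    ∃ M : Set I, ∀ ε > 0, ∃ x, weavingSum (a x) (b x) M < ε := by
  let O : ℕ → Set (I → Bool) := fun n =>
    {g | ∃ x, weavingSum (a x) (b x) {i | g i} < 1 / ((n : ℝ) + 1)}
  have hO : Dense (⋂ n, O n) := dense_iInter_of_isOpen
    (fun n => by
      simp only [O, ofPred_exists]
      exact isOpen_iUnion fun x => isOpen_setOf_weavingSum_lt (ha x) (hb x) (hsa x) (hsb x) _)
    (fun n => dense_setOf_exists_weavingSum_lt a b hsmall (by positivity))
  obtain ⟨g, hg⟩ := hO.nonempty
  refine ⟨{i | g i}, fun ε hε => ?_⟩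
  obtain ⟨n, hn⟩ := exists_nat_one_div_lt hε
  obtain ⟨x, hx⟩ := mem_iInter.1 hg n
  exact ⟨x, hx.trans hn⟩

end Weaving

theorem not_woven_of_small_lower_bounds_general
    {H : Type*} [NormedAddCommGroup H] [InnerProductSpace ℂ H]
    {I : Type*}
    (W V : I → Submodule ℂ H) [∀ i, CompleteSpace (W i)] [∀ i, CompleteSpace (V i)]
    (ν μ : I → ℝ)
    (CW DW CV DV : ℝ) (hCW : 0 < CW) (hCV : 0 < CV)
    (hW : ∀ f : H,
      CW * ‖f‖ ^ 2 ≤ ∑' i : I, ν i ^ 2 * ‖(Submodule.orthogonalProjectionOnto (W i) f : H)‖ ^ 2 ∧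
      ∑' i : I, ν i ^ 2 * ‖(Submodule.orthogonalProjectionOnto (W i) f : H)‖ ^ 2 ≤ DW * ‖f‖ ^ 2)
    (hV : ∀ f : H,
      CV * ‖f‖ ^ 2 ≤ ∑' i : I, μ i ^ 2 * ‖(Submodule.orthogonalProjectionOnto (V i) f : H)‖ ^ 2 ∧
      ∑' i : I, μ i ^ 2 * ‖(Submodule.orthogonalProjectionOnto (V i) f : H)‖ ^ 2 ≤ DV * ‖f‖ ^ 2)
    (hsmall : ∀ I₀ J₀ : Finset I, Disjoint I₀ J₀ → ∀ ε : ℝ, 0 < ε →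
      ∃ σ δ : Set I, Disjoint σ δ ∧ σ ∪ δ = ((I₀ : Set I) ∪ (J₀ : Set I))ᶜ ∧
        ∃ f : H, ‖f‖ = 1 ∧
          (∑' i : ((I₀ : Set I) ∪ σ : Set I),
              ν (i : I) ^ 2 * ‖(Submodule.orthogonalProjectionOnto (W (i : I)) f : H)‖ ^ 2) +
            (∑' i : ((J₀ : Set I) ∪ δ : Set I),
              μ (i : I) ^ 2 * ‖(Submodule.orthogonalProjectionOnto (V (i : I)) f : H)‖ ^ 2) < ε) :
    (∃ M : Set I,
      (⨅ f : {g : H // ‖g‖ = 1},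
        (∑' i : M, ν (i : I) ^ 2 * ‖(Submodule.orthogonalProjectionOnto (W (i : I)) (f : H) : H)‖ ^ 2) +
          (∑' i : ↥Mᶜ, μ (i : I) ^ 2 * ‖(Submodule.orthogonalProjectionOnto (V (i : I)) (f : H) : H)‖ ^ 2)) = 0) ∧
    ¬ (∃ A B : ℝ, 0 < A ∧ 0 < B ∧ ∀ σ : Set I, ∀ f : H,
      A * ‖f‖ ^ 2 ≤
        (∑' i : σ, ν (i : I) ^ 2 * ‖(Submodule.orthogonalProjectionOnto (W (i : I)) f : H)‖ ^ 2) +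
          (∑' i : ↥σᶜ, μ (i : I) ^ 2 * ‖(Submodule.orthogonalProjectionOnto (V (i : I)) f : H)‖ ^ 2) ∧
      (∑' i : σ, ν (i : I) ^ 2 * ‖(Submodule.orthogonalProjectionOnto (W (i : I)) f : H)‖ ^ 2) +
          (∑' i : ↥σᶜ, μ (i : I) ^ 2 * ‖(Submodule.orthogonalProjectionOnto (V (i : I)) f : H)‖ ^ 2) ≤
        B * ‖f‖ ^ 2) := by
  let a : {g : H // ‖g‖ = 1} → I → ℝ := fun f i =>
    ν i ^ 2 * ‖(Submodule.orthogonalProjectionOnto (W i) (f : H) : H)‖ ^ 2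
  let b : {g : H // ‖g‖ = 1} → I → ℝ := fun f i =>
    μ i ^ 2 * ‖(Submodule.orthogonalProjectionOnto (V i) (f : H) : H)‖ ^ 2
  have hunit : ∀ f : {g : H // ‖g‖ = 1}, ‖(f : H)‖ ^ 2 = 1 := fun f => by rw [f.2, one_pow]
  have hsa : ∀ f, Summable (a f) := fun f =>
    summable_of_tsum_ne_zero ((hW f).1.trans_lt' (by rw [hunit, mul_one]; exact hCW)).ne'
  have hsb : ∀ f, Summable (b f) := fun f =>
    summable_of_tsum_ne_zero ((hV f).1.trans_lt' (by rw [hunit, mul_one]; exact hCV)).ne'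
  have ha : ∀ f, 0 ≤ a f := fun f i => by positivity
  have hb : ∀ f, 0 ≤ b f := fun f i => by positivity
  obtain ⟨M, hM⟩ := exists_forall_exists_weavingSum_lt a b ha hb hsa hsb
    fun A B hAB ε hε => by
      obtain ⟨σ, δ, hσδ, hcov, f, hf, hlt⟩ := hsmall A B hAB ε hε
      have hcompl := compl_union_eq_union_of_union_eq_compl (Finset.disjoint_coe.2 hAB) hσδ hcov
      refine ⟨↑A ∪ σ, subset_union_left, ?_, ⟨f, hf⟩, ?_⟩
      · exact subset_compl_iff_disjoint_left.1 (hcompl ▸ subset_union_left)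
      · rwa [weavingSum, hcompl]
  have : Nonempty {g : H // ‖g‖ = 1} := (hM 1 one_pos).nonempty
  refine ⟨⟨M, ciInf_eq_of_forall_ge_of_forall_gt_exists_lt
    (fun f => weavingSum_nonneg (ha f) (hb f) M) hM⟩, ?_⟩
  rintro ⟨A, B, hA, -, hAB⟩
  obtain ⟨f, hf⟩ := hM A hA
  have := (hAB M f).1
  rw [hunit, mul_one] at this
  exact hf.not_ge this

/-- If arbitrarily small lower weaving bounds occur relative to any pair of disjoint finite
index sets, then some weaving has lower fusion frame bound zero; in particular the two
fusion frames are not woven fusion frames. -/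
theorem not_woven_of_small_lower_bounds
    {H : Type*} [NormedAddCommGroup H] [InnerProductSpace ℂ H] [CompleteSpace H]
    [TopologicalSpace.SeparableSpace H]
    {I : Type*} [Countable I]
    (W V : I → Submodule ℂ H) [∀ i, CompleteSpace (W i)] [∀ i, CompleteSpace (V i)]
    (ν μ : I → ℝ) (hν : ∀ i, 0 < ν i) (hμ : ∀ i, 0 < μ i)
    (CW DW CV DV : ℝ) (hCW : 0 < CW) (hDW : 0 < DW) (hCV : 0 < CV) (hDV : 0 < DV)
    (hW : ∀ f : H,
      CW * ‖f‖ ^ 2 ≤ ∑' i : I, ν i ^ 2 * ‖(Submodule.orthogonalProjectionOnto (W i) f : H)‖ ^ 2 ∧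
      ∑' i : I, ν i ^ 2 * ‖(Submodule.orthogonalProjectionOnto (W i) f : H)‖ ^ 2 ≤ DW * ‖f‖ ^ 2)
    (hV : ∀ f : H,
      CV * ‖f‖ ^ 2 ≤ ∑' i : I, μ i ^ 2 * ‖(Submodule.orthogonalProjectionOnto (V i) f : H)‖ ^ 2 ∧
      ∑' i : I, μ i ^ 2 * ‖(Submodule.orthogonalProjectionOnto (V i) f : H)‖ ^ 2 ≤ DV * ‖f‖ ^ 2)
    (hsmall : ∀ I₀ J₀ : Finset I, Disjoint I₀ J₀ → ∀ ε : ℝ, 0 < ε →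
      ∃ σ δ : Set I, Disjoint σ δ ∧ σ ∪ δ = ((I₀ : Set I) ∪ (J₀ : Set I))ᶜ ∧
        ∃ f : H, ‖f‖ = 1 ∧
          (∑' i : ((I₀ : Set I) ∪ σ : Set I),
              ν (i : I) ^ 2 * ‖(Submodule.orthogonalProjectionOnto (W (i : I)) f : H)‖ ^ 2) +
            (∑' i : ((J₀ : Set I) ∪ δ : Set I),
              μ (i : I) ^ 2 * ‖(Submodule.orthogonalProjectionOnto (V (i : I)) f : H)‖ ^ 2) < ε) :
    (∃ M : Set I,
      (⨅ f : {g : H // ‖g‖ = 1},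
        (∑' i : M, ν (i : I) ^ 2 * ‖(Submodule.orthogonalProjectionOnto (W (i : I)) (f : H) : H)‖ ^ 2) +
          (∑' i : ↥Mᶜ, μ (i : I) ^ 2 * ‖(Submodule.orthogonalProjectionOnto (V (i : I)) (f : H) : H)‖ ^ 2)) = 0) ∧
    ¬ (∃ A B : ℝ, 0 < A ∧ 0 < B ∧ ∀ σ : Set I, ∀ f : H,
      A * ‖f‖ ^ 2 ≤
        (∑' i : σ, ν (i : I) ^ 2 * ‖(Submodule.orthogonalProjectionOnto (W (i : I)) f : H)‖ ^ 2) +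
          (∑' i : ↥σᶜ, μ (i : I) ^ 2 * ‖(Submodule.orthogonalProjectionOnto (V (i : I)) f : H)‖ ^ 2) ∧
      (∑' i : σ, ν (i : I) ^ 2 * ‖(Submodule.orthogonalProjectionOnto (W (i : I)) f : H)‖ ^ 2) +
          (∑' i : ↥σᶜ, μ (i : I) ^ 2 * ‖(Submodule.orthogonalProjectionOnto (V (i : I)) f : H)‖ ^ 2) ≤
        B * ‖f‖ ^ 2) :=
  not_woven_of_small_lower_bounds_general W V ν μ CW DW CV DV hCW hCV hW hV hsmall
end

section
/- Let H be a separable complex Hilbert space, let J ⊆ I, and let {W_i}_{i∈I} and {V_i}_{i∈I} be fusion frames for H with weights {ν_i} and {μ_i} and with upper fusion frame bounds B_W and B_V respectively. If the subfamilies {W_i}_{i∈J} and {V_i}_{i∈J} are woven fusion frames with universal lower bound A > 0 (i.e., for every τ ⊆ J and f ∈ H, A‖f‖² ≤ Σ_{i∈τ} ν_i² ‖P_{W_i} f‖² + Σ_{i∈J∖τ} μ_i² ‖P_{V_i} f‖²), then {W_i}_{i∈I} and {V_i}_{i∈I} are woven fusion frames for H with universal bounds A and B_W + B_V. -/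
open Submodule

lemma tsum_subtype_mono_of_nonneg {ι : Type*} {g : ι → ℝ} (hg : ∀ i, 0 ≤ g i)
    (hsum : Summable g) {s t : Set ι} (hst : s ⊆ t) : ∑' i : s, g i ≤ ∑' i : t, g i :=
  tsum_comp_le_tsum_of_inj (hsum.subtype t) (fun _ => hg _) (Set.inclusion_injective hst)

/-- A positive lower frame bound forces summability, since a non-summable `tsum` is `0`. -/
lemma summable_of_fusion_lower_bound {𝕜 H ι : Type*} [RCLike 𝕜] [NormedAddCommGroup H]
    [InnerProductSpace 𝕜 H] (W : ι → Submodule 𝕜 H) [∀ i, (W i).HasOrthogonalProjection]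
    (ν : ι → ℝ) {C : ℝ} (hC : 0 < C)
    (hlow : ∀ f : H, C * ‖f‖ ^ 2 ≤ ∑' i, ν i ^ 2 * ‖(orthogonalProjectionOnto (W i) f : H)‖ ^ 2)
    (f : H) : Summable fun i => ν i ^ 2 * ‖(orthogonalProjectionOnto (W i) f : H)‖ ^ 2 := by
  obtain rfl | hf := eq_or_ne f 0
  · simp
  · by_contra hns
    have hpos : 0 < C * ‖f‖ ^ 2 := by positivity
    linarith [hlow f, tsum_eq_zero_of_not_summable hns]

theorem woven_fusion_frames_of_woven_subfamily_general
    {H : Type*} [NormedAddCommGroup H] [InnerProductSpace ℂ H]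
    {I : Type*} (J : Set I)
    (W V : I → Submodule ℂ H) [∀ i, CompleteSpace (W i)] [∀ i, CompleteSpace (V i)]
    (ν μ : I → ℝ)
    (CW BW CV BV : ℝ) (hCW : 0 < CW) (hCV : 0 < CV)
    (hW : ∀ f : H,
      CW * ‖f‖ ^ 2 ≤ ∑' i : I, ν i ^ 2 * ‖(Submodule.orthogonalProjection (W i) f : H)‖ ^ 2 ∧
      ∑' i : I, ν i ^ 2 * ‖(Submodule.orthogonalProjection (W i) f : H)‖ ^ 2 ≤ BW * ‖f‖ ^ 2)
    (hV : ∀ f : H,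
      CV * ‖f‖ ^ 2 ≤ ∑' i : I, μ i ^ 2 * ‖(Submodule.orthogonalProjection (V i) f : H)‖ ^ 2 ∧
      ∑' i : I, μ i ^ 2 * ‖(Submodule.orthogonalProjection (V i) f : H)‖ ^ 2 ≤ BV * ‖f‖ ^ 2)
    (A : ℝ)
    (hwovenJ : ∀ τ : Set I, τ ⊆ J → ∀ f : H,
      A * ‖f‖ ^ 2 ≤
        (∑' i : τ, ν (i : I) ^ 2 * ‖(Submodule.orthogonalProjection (W (i : I)) f : H)‖ ^ 2) +
          (∑' i : (J \ τ : Set I), μ (i : I) ^ 2 * ‖(Submodule.orthogonalProjection (V (i : I)) f : H)‖ ^ 2)) :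
    ∀ σ : Set I, ∀ f : H,
      A * ‖f‖ ^ 2 ≤
        (∑' i : σ, ν (i : I) ^ 2 * ‖(Submodule.orthogonalProjection (W (i : I)) f : H)‖ ^ 2) +
          (∑' i : ↥σᶜ, μ (i : I) ^ 2 * ‖(Submodule.orthogonalProjection (V (i : I)) f : H)‖ ^ 2) ∧
      (∑' i : σ, ν (i : I) ^ 2 * ‖(Submodule.orthogonalProjection (W (i : I)) f : H)‖ ^ 2) +
          (∑' i : ↥σᶜ, μ (i : I) ^ 2 * ‖(Submodule.orthogonalProjection (V (i : I)) f : H)‖ ^ 2) ≤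
        (BW + BV) * ‖f‖ ^ 2 := by
  intro σ f
  have hsumW := summable_of_fusion_lower_bound W ν hCW (fun f => (hW f).1) f
  have hsumV := summable_of_fusion_lower_bound V μ hCV (fun f => (hV f).1) f
  constructor
  · -- weave `σ ∩ J` inside `J`; the remaining terms of `σ` and `σᶜ` only add to the sum
    have hdiff : J \ (σ ∩ J) ⊆ σᶜ := fun i hi hiσ => hi.2 ⟨hiσ, hi.1⟩
    calc A * ‖f‖ ^ 2 ≤ _ := hwovenJ (σ ∩ J) Set.inter_subset_right f
      _ ≤ _ := add_le_add
        (tsum_subtype_mono_of_nonneg (fun _ => by positivity) hsumW Set.inter_subset_left)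
        (tsum_subtype_mono_of_nonneg (fun _ => by positivity) hsumV hdiff)
  · calc _ ≤ (∑' i, ν i ^ 2 * ‖(orthogonalProjectionOnto (W i) f : H)‖ ^ 2) +
            ∑' i, μ i ^ 2 * ‖(orthogonalProjectionOnto (V i) f : H)‖ ^ 2 :=
          add_le_add (hsumW.tsum_subtype_le _ σ (fun _ => by positivity))
            (hsumV.tsum_subtype_le _ σᶜ (fun _ => by positivity))
      _ ≤ BW * ‖f‖ ^ 2 + BV * ‖f‖ ^ 2 := add_le_add (hW f).2 (hV f).2
      _ = (BW + BV) * ‖f‖ ^ 2 := by ring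

/-- If the subfamilies over `J ⊆ I` of two fusion frames are woven with universal lower
bound `A`, then the full families over `I` are woven fusion frames with universal bounds
`A` and `B_W + B_V`. -/
theorem woven_fusion_frames_of_woven_subfamily
    {H : Type*} [NormedAddCommGroup H] [InnerProductSpace ℂ H] [CompleteSpace H]
    [TopologicalSpace.SeparableSpace H]
    {I : Type*} [Countable I] (J : Set I)
    (W V : I → Submodule ℂ H) [∀ i, CompleteSpace (W i)] [∀ i, CompleteSpace (V i)]
    (ν μ : I → ℝ) (hν : ∀ i, 0 < ν i) (hμ : ∀ i, 0 < μ i)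
    (CW BW CV BV : ℝ) (hCW : 0 < CW) (hBW : 0 < BW) (hCV : 0 < CV) (hBV : 0 < BV)
    (hW : ∀ f : H,
      CW * ‖f‖ ^ 2 ≤ ∑' i : I, ν i ^ 2 * ‖(Submodule.orthogonalProjection (W i) f : H)‖ ^ 2 ∧
      ∑' i : I, ν i ^ 2 * ‖(Submodule.orthogonalProjection (W i) f : H)‖ ^ 2 ≤ BW * ‖f‖ ^ 2)
    (hV : ∀ f : H,
      CV * ‖f‖ ^ 2 ≤ ∑' i : I, μ i ^ 2 * ‖(Submodule.orthogonalProjection (V i) f : H)‖ ^ 2 ∧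
      ∑' i : I, μ i ^ 2 * ‖(Submodule.orthogonalProjection (V i) f : H)‖ ^ 2 ≤ BV * ‖f‖ ^ 2)
    (A : ℝ) (hA : 0 < A)
    (hwovenJ : ∀ τ : Set I, τ ⊆ J → ∀ f : H,
      A * ‖f‖ ^ 2 ≤
        (∑' i : τ, ν (i : I) ^ 2 * ‖(Submodule.orthogonalProjection (W (i : I)) f : H)‖ ^ 2) +
          (∑' i : (J \ τ : Set I), μ (i : I) ^ 2 * ‖(Submodule.orthogonalProjection (V (i : I)) f : H)‖ ^ 2)) :
    ∀ σ : Set I, ∀ f : H,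
      A * ‖f‖ ^ 2 ≤
        (∑' i : σ, ν (i : I) ^ 2 * ‖(Submodule.orthogonalProjection (W (i : I)) f : H)‖ ^ 2) +
          (∑' i : ↥σᶜ, μ (i : I) ^ 2 * ‖(Submodule.orthogonalProjection (V (i : I)) f : H)‖ ^ 2) ∧
      (∑' i : σ, ν (i : I) ^ 2 * ‖(Submodule.orthogonalProjection (W (i : I)) f : H)‖ ^ 2) +
          (∑' i : ↥σᶜ, μ (i : I) ^ 2 * ‖(Submodule.orthogonalProjection (V (i : I)) f : H)‖ ^ 2) ≤
        (BW + BV) * ‖f‖ ^ 2 :=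
  woven_fusion_frames_of_woven_subfamily_general J W V ν μ CW BW CV BV hCW hCV hW hV A hwovenJ
end

section
/- Let H be a separable complex Hilbert space and let {W_i}_{i∈I} and {V_i}_{i∈I} be woven fusion frames for H with weights {ν_i} and {μ_i} and universal bounds A, B > 0. Suppose J ⊆ I and there is a constant D with 0 < D < A such that Σ_{i∈J} ν_i² ‖P_{W_i} f‖² ≤ D‖f‖² for every f ∈ H. Then {W_i}_{i∈I∖J} and {V_i}_{i∈I∖J} are woven fusion frames for H with universal bounds A − D and B (i.e., for every σ ⊆ I∖J and f ∈ H, (A−D)‖f‖² ≤ Σ_{i∈σ} ν_i² ‖P_{W_i} f‖² + Σ_{i∈(I∖J)∖σ} μ_i² ‖P_{V_i} f‖² ≤ B‖f‖²), and moreover each of {W_i}_{i∈I∖J} and {V_i}_{i∈I∖J} is a fusion frame for H with lower bound A − D. -/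
/-!
For `σ ⊆ Jᶜ`, apply the woven inequalities to `σ ∪ J`: its `W`-part is the part over `σ` plus
the part over `J`, which lies between `0` and `D‖f‖²`, and its `V`-part runs over `Jᶜ \ σ`.
Splitting the `W`-sum needs summability, which the lower bound `A > 0` forces because a
non-summable `tsum` is `0`. The two fusion frame bounds are the cases `σ = Jᶜ` and `σ = ∅`.
-/

open Set

section WeightedSums

variable {I : Type*}

theorem summable_of_pos_le_tsum {a : I → ℝ} {c : ℝ} (hc : 0 < c) (h : c ≤ ∑' i, a i) :
    Summable a := by
  by_contra hna
  rw [tsum_eq_zero_of_not_summable hna] at h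
  exact hc.not_ge h

theorem tsum_union_add_tsum_compl_eq {a b : I → ℝ} (ha : Summable a) {σ J : Set I}
    (hσ : σ ⊆ Jᶜ) :
    ∑' i : ↥(σ ∪ J), a i + ∑' i : ↥(σ ∪ J)ᶜ, b i =
      ∑' i : σ, a i + ∑' i : ↥(Jᶜ \ σ), b i + ∑' i : J, a i := by
  have hcompl : (σ ∪ J)ᶜ = Jᶜ \ σ := by rw [compl_union, diff_eq, inter_comm]
  rw [hcompl, Summable.tsum_union_disjoint (subset_compl_iff_disjoint_right.mp hσ)
    (ha.subtype σ) (ha.subtype J)]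
  ring

theorem woven_bounds_of_subset_compl {a b : I → ℝ} {A B D c : ℝ} (ha : Summable a)
    (ha0 : ∀ i, 0 ≤ a i)
    (hwoven : ∀ σ : Set I, A * c ≤ ∑' i : σ, a i + ∑' i : ↥σᶜ, b i ∧
      ∑' i : σ, a i + ∑' i : ↥σᶜ, b i ≤ B * c)
    {J : Set I} (hJ : ∑' i : J, a i ≤ D * c) {σ : Set I} (hσ : σ ⊆ Jᶜ) :
    (A - D) * c ≤ ∑' i : σ, a i + ∑' i : ↥(Jᶜ \ σ), b i ∧
      ∑' i : σ, a i + ∑' i : ↥(Jᶜ \ σ), b i ≤ B * c := by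
  obtain ⟨hlower, hupper⟩ := hwoven (σ ∪ J)
  rw [tsum_union_add_tsum_compl_eq (b := b) ha hσ] at hlower hupper
  have hJ0 : 0 ≤ ∑' i : J, a i := tsum_nonneg fun i => ha0 i
  constructor <;> linarith

end WeightedSums

section FusionFrames

variable {H : Type*} [NormedAddCommGroup H] [InnerProductSpace ℂ H] {I : Type*}

noncomputable def weightedProjNormSq (W : I → Submodule ℂ H) [∀ i, CompleteSpace (W i)]
    (ν : I → ℝ) (f : H) : I → ℝ :=
  fun i => ν i ^ 2 * ‖(W i).starProjection f‖ ^ 2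

variable {W : I → Submodule ℂ H} [∀ i, CompleteSpace (W i)] {ν : I → ℝ}

theorem weightedProjNormSq_nonneg (f : H) (i : I) : 0 ≤ weightedProjNormSq W ν f i := by
  unfold weightedProjNormSq
  positivity

theorem summable_weightedProjNormSq_of_lower_bound {A : ℝ} (hA : 0 < A)
    (h : ∀ f : H, A * ‖f‖ ^ 2 ≤ ∑' i, weightedProjNormSq W ν f i) (f : H) :
    Summable (weightedProjNormSq W ν f) := by
  rcases eq_or_ne f 0 with rfl | hf
  · unfold weightedProjNormSq
    simp
  · exact summable_of_pos_le_tsum (by positivity) (h f)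

end FusionFrames

theorem woven_fusion_frames_delete_small_subfamily_general
    {H : Type*} [NormedAddCommGroup H] [InnerProductSpace ℂ H]
    {I : Type*}
    (W V : I → Submodule ℂ H) [∀ i, CompleteSpace (W i)] [∀ i, CompleteSpace (V i)]
    (ν μ : I → ℝ)
    (A B : ℝ) (hA : 0 < A)
    (hwoven : ∀ σ : Set I, ∀ f : H,
      A * ‖f‖ ^ 2 ≤
        (∑' i : σ, ν (i : I) ^ 2 * ‖(Submodule.orthogonalProjection (W (i : I)) f : H)‖ ^ 2) +
          (∑' i : ↥σᶜ, μ (i : I) ^ 2 * ‖(Submodule.orthogonalProjection (V (i : I)) f : H)‖ ^ 2) ∧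
      (∑' i : σ, ν (i : I) ^ 2 * ‖(Submodule.orthogonalProjection (W (i : I)) f : H)‖ ^ 2) +
          (∑' i : ↥σᶜ, μ (i : I) ^ 2 * ‖(Submodule.orthogonalProjection (V (i : I)) f : H)‖ ^ 2) ≤
        B * ‖f‖ ^ 2)
    (J : Set I) (D : ℝ)
    (hJ : ∀ f : H,
      (∑' i : J, ν (i : I) ^ 2 * ‖(Submodule.orthogonalProjection (W (i : I)) f : H)‖ ^ 2) ≤ D * ‖f‖ ^ 2) :
    (∀ σ : Set I, σ ⊆ Jᶜ → ∀ f : H,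
      (A - D) * ‖f‖ ^ 2 ≤
        (∑' i : σ, ν (i : I) ^ 2 * ‖(Submodule.orthogonalProjection (W (i : I)) f : H)‖ ^ 2) +
          (∑' i : (Jᶜ \ σ : Set I), μ (i : I) ^ 2 * ‖(Submodule.orthogonalProjection (V (i : I)) f : H)‖ ^ 2) ∧
      (∑' i : σ, ν (i : I) ^ 2 * ‖(Submodule.orthogonalProjection (W (i : I)) f : H)‖ ^ 2) +
          (∑' i : (Jᶜ \ σ : Set I), μ (i : I) ^ 2 * ‖(Submodule.orthogonalProjection (V (i : I)) f : H)‖ ^ 2) ≤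
        B * ‖f‖ ^ 2) ∧
    (∀ f : H, (A - D) * ‖f‖ ^ 2 ≤
      ∑' i : (Jᶜ : Set I), ν (i : I) ^ 2 * ‖(Submodule.orthogonalProjection (W (i : I)) f : H)‖ ^ 2) ∧
    (∀ f : H, (A - D) * ‖f‖ ^ 2 ≤
      ∑' i : (Jᶜ : Set I), μ (i : I) ^ 2 * ‖(Submodule.orthogonalProjection (V (i : I)) f : H)‖ ^ 2) := by
  have hsummable : ∀ f : H, Summable (weightedProjNormSq W ν f) :=
    summable_weightedProjNormSq_of_lower_bound hA fun f => calc
      A * ‖f‖ ^ 2 ≤ ∑' i : (univ : Set I), weightedProjNormSq W ν f i +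
          ∑' i : ↥(univ : Set I)ᶜ, weightedProjNormSq V μ f i := (hwoven univ f).1
      _ = ∑' i, weightedProjNormSq W ν f i := by
          rw [tsum_univ, compl_univ, tsum_empty (β := (∅ : Set I)), add_zero]
  have hdelete : ∀ σ : Set I, σ ⊆ Jᶜ → ∀ f : H, _ := fun σ hσ f =>
    woven_bounds_of_subset_compl (a := weightedProjNormSq W ν f)
      (b := weightedProjNormSq V μ f) (hsummable f) (weightedProjNormSq_nonneg f)
      (fun σ => hwoven σ f) (hJ f) hσ
  refine ⟨hdelete, fun f => ?_, fun f => ?_⟩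
  · simpa [weightedProjNormSq] using (hdelete Jᶜ subset_rfl f).1
  · have hV := (hdelete ∅ (empty_subset _) f).1
    rw [diff_empty] at hV
    simpa [weightedProjNormSq] using hV

/-- Deleting a subfamily whose weighted projections are bounded by `D < A` from woven
fusion frames leaves woven fusion frames with universal bounds `A - D` and `B`, and each
remaining family is itself a fusion frame with lower bound `A - D`. -/
theorem woven_fusion_frames_delete_small_subfamily
    {H : Type*} [NormedAddCommGroup H] [InnerProductSpace ℂ H] [CompleteSpace H]
    [TopologicalSpace.SeparableSpace H]
    {I : Type*} [Countable I]
    (W V : I → Submodule ℂ H) [∀ i, CompleteSpace (W i)] [∀ i, CompleteSpace (V i)]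
    (ν μ : I → ℝ) (hν : ∀ i, 0 < ν i) (hμ : ∀ i, 0 < μ i)
    (A B : ℝ) (hA : 0 < A) (hB : 0 < B)
    (hwoven : ∀ σ : Set I, ∀ f : H,
      A * ‖f‖ ^ 2 ≤
        (∑' i : σ, ν (i : I) ^ 2 * ‖(Submodule.orthogonalProjection (W (i : I)) f : H)‖ ^ 2) +
          (∑' i : ↥σᶜ, μ (i : I) ^ 2 * ‖(Submodule.orthogonalProjection (V (i : I)) f : H)‖ ^ 2) ∧
      (∑' i : σ, ν (i : I) ^ 2 * ‖(Submodule.orthogonalProjection (W (i : I)) f : H)‖ ^ 2) +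
          (∑' i : ↥σᶜ, μ (i : I) ^ 2 * ‖(Submodule.orthogonalProjection (V (i : I)) f : H)‖ ^ 2) ≤
        B * ‖f‖ ^ 2)
    (J : Set I) (D : ℝ) (hD0 : 0 < D) (hDA : D < A)
    (hJ : ∀ f : H,
      (∑' i : J, ν (i : I) ^ 2 * ‖(Submodule.orthogonalProjection (W (i : I)) f : H)‖ ^ 2) ≤ D * ‖f‖ ^ 2) :
    (∀ σ : Set I, σ ⊆ Jᶜ → ∀ f : H,
      (A - D) * ‖f‖ ^ 2 ≤
        (∑' i : σ, ν (i : I) ^ 2 * ‖(Submodule.orthogonalProjection (W (i : I)) f : H)‖ ^ 2) +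
          (∑' i : (Jᶜ \ σ : Set I), μ (i : I) ^ 2 * ‖(Submodule.orthogonalProjection (V (i : I)) f : H)‖ ^ 2) ∧
      (∑' i : σ, ν (i : I) ^ 2 * ‖(Submodule.orthogonalProjection (W (i : I)) f : H)‖ ^ 2) +
          (∑' i : (Jᶜ \ σ : Set I), μ (i : I) ^ 2 * ‖(Submodule.orthogonalProjection (V (i : I)) f : H)‖ ^ 2) ≤
        B * ‖f‖ ^ 2) ∧
    (∀ f : H, (A - D) * ‖f‖ ^ 2 ≤
      ∑' i : (Jᶜ : Set I), ν (i : I) ^ 2 * ‖(Submodule.orthogonalProjection (W (i : I)) f : H)‖ ^ 2) ∧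
    (∀ f : H, (A - D) * ‖f‖ ^ 2 ≤
      ∑' i : (Jᶜ : Set I), μ (i : I) ^ 2 * ‖(Submodule.orthogonalProjection (V (i : I)) f : H)‖ ^ 2) :=
  woven_fusion_frames_delete_small_subfamily_general W V ν μ A B hA hwoven J D hJ
end

section
/- Let H be a separable complex Hilbert space and let {W_i}_{i∈I} and {V_i}_{i∈I} be fusion frames for H with weights {ν_i} and {μ_i} and fusion frame bounds (A_W, B_W) and (A_V, B_V) respectively. Define the bounded operators T_W, T_V : ℓ²(I, H) → H by T_W({h_i}) = Σ_{i∈I} ν_i P_{W_i} h_i and T_V({h_i}) = Σ_{i∈I} μ_i P_{V_i} h_i. Suppose there exist constants 0 < λ₁, λ₂, μ < 1 such that (2/A_W)·(√B_W + √B_V)·(λ₁√B_W + λ₂√B_V + μ) ≤ 1 and ‖T_W h − T_V h‖ ≤ λ₁‖T_W h‖ + λ₂‖T_V h‖ + μ‖h‖ for every h ∈ ℓ²(I, H). Then {W_i}_{i∈I} and {V_i}_{i∈I} are woven fusion frames for H with universal bounds A_W/2 and B_W + B_V. -/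
/-!
Fix `f` and put `x i = ν i P_{W i} f - μ i P_{V i} f`. Since `ν i P_{W i}` and `μ i P_{V i}` are
symmetric, `⟪T_W x - T_V x, f⟫ = ‖x‖²`, while the synthesis operator of a Bessel family of
symmetric operators with bound `B` has norm at most `√B`. The perturbation inequality therefore
gives `‖x‖² ≤ ε ‖x‖ ‖f‖` with `ε = λ₁ √B_W + λ₂ √B_V + μ`, i.e. `‖x‖ ≤ ε ‖f‖`; this is applied to
finite truncations of `x`, on which the synthesis series are finite sums. By Cauchy–Schwarz
the terms `ν i² ‖P_{W i} f‖²` and `μ i² ‖P_{V i} f‖²` then differ, summed over any set of indices,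
by at most `ε (√B_W + √B_V) ‖f‖² ≤ A_W/2 ‖f‖²`, so swapping the `W`-terms outside `σ` for
`V`-terms costs at most half of the lower frame bound `A_W`.
-/

open scoped InnerProductSpace
open Finset RCLike

theorem le_of_sq_le_mul {a c : ℝ} (hc : 0 ≤ c) (h : a ^ 2 ≤ c * a) : a ≤ c := by
  nlinarith

theorem sum_norm_sq_sub_norm_sq_le {ι E : Type*} [SeminormedAddCommGroup E] (s : Finset ι)
    (a b : ι → E) :
    ∑ i ∈ s, (‖a i‖ ^ 2 - ‖b i‖ ^ 2) ≤
      √(∑ i ∈ s, ‖a i - b i‖ ^ 2) * (√(∑ i ∈ s, ‖a i‖ ^ 2) + √(∑ i ∈ s, ‖b i‖ ^ 2)) :=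
  calc ∑ i ∈ s, (‖a i‖ ^ 2 - ‖b i‖ ^ 2)
      ≤ ∑ i ∈ s, (‖a i - b i‖ * ‖a i‖ + ‖a i - b i‖ * ‖b i‖) := by
        refine sum_le_sum fun i _ => ?_
        calc ‖a i‖ ^ 2 - ‖b i‖ ^ 2 = (‖a i‖ - ‖b i‖) * (‖a i‖ + ‖b i‖) := by ring
          _ ≤ ‖a i - b i‖ * (‖a i‖ + ‖b i‖) := by gcongr; exact norm_sub_norm_le _ _
          _ = _ := by ring
    _ ≤ _ := by
        rw [sum_add_distrib, mul_add]
        gcongr <;> exact Real.sum_mul_le_sqrt_mul_sqrt _ _ _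

namespace Summable

variable {ι : Type*} {a b : ι → ℝ}

theorem sub_le_tsum_subtype_add_tsum_compl (ha : Summable a) (hb : Summable b) {c : ℝ}
    (hab : ∀ F : Finset ι, ∑ i ∈ F, (a i - b i) ≤ c) (s : Set ι) :
    ∑' i, a i - c ≤ ∑' i : s, a i + ∑' i : ↥sᶜ, b i := by
  have hcompl : ∑' i : ↥sᶜ, (a i - b i) ≤ c :=
    ((ha.subtype _).sub (hb.subtype _)).tsum_le_of_sum_le fun G => by
      simpa [sum_map] using hab (G.map (Function.Embedding.subtype _))
  rw [Summable.tsum_sub (f := fun i : ↥sᶜ => a i) (g := fun i : ↥sᶜ => b i) (ha.subtype _)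
    (hb.subtype _)] at hcompl
  rw [← (ha.subtype s).tsum_add_tsum_compl (ha.subtype sᶜ)]
  linarith

theorem tsum_subtype_add_tsum_compl_le (ha : Summable a) (hb : Summable b) (ha0 : 0 ≤ a)
    (hb0 : 0 ≤ b) (s : Set ι) :
    ∑' i : s, a i + ∑' i : ↥sᶜ, b i ≤ ∑' i, a i + ∑' i, b i :=
  add_le_add (ha.tsum_subtype_le _ s ha0) (hb.tsum_subtype_le _ sᶜ hb0)

end Summable

section SymmetricFamilies

variable {𝕜 E ι : Type*} [RCLike 𝕜] [NormedAddCommGroup E] [InnerProductSpace 𝕜 E]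

theorem summable_norm_apply_sq_of_le_tsum (T : ι → E →ₗ[𝕜] E) {A : ℝ} (hA : 0 < A) {f : E}
    (hf : A * ‖f‖ ^ 2 ≤ ∑' i, ‖T i f‖ ^ 2) : Summable fun i => ‖T i f‖ ^ 2 := by
  by_contra hs
  rw [tsum_eq_zero_of_not_summable hs] at hf
  have hf0 : f = 0 := by
    have : ‖f‖ ^ 2 ≤ 0 := by nlinarith
    simpa using this
  simp [hf0, summable_zero] at hs

theorem sqrt_sum_norm_apply_sq_le {F : Type*} [SeminormedAddCommGroup F] {T : ι → E → F}
    {B : ℝ} (hB : ∀ (g : E) (s : Finset ι), ∑ i ∈ s, ‖T i g‖ ^ 2 ≤ B * ‖g‖ ^ 2)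
    (g : E) (s : Finset ι) : √(∑ i ∈ s, ‖T i g‖ ^ 2) ≤ √B * ‖g‖ := by
  rw [← Real.sqrt_sq (norm_nonneg g), ← Real.sqrt_mul' _ (sq_nonneg _)]
  exact Real.sqrt_le_sqrt (hB g s)

theorem norm_sum_apply_le_of_isSymmetric {T : ι → E →ₗ[𝕜] E} (hT : ∀ i, (T i).IsSymmetric)
    {B : ℝ} (hB : ∀ (g : E) (s : Finset ι), ∑ i ∈ s, ‖T i g‖ ^ 2 ≤ B * ‖g‖ ^ 2)
    (s : Finset ι) (y : ι → E) :
    ‖∑ i ∈ s, T i (y i)‖ ≤ √B * √(∑ i ∈ s, ‖y i‖ ^ 2) := by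
  set g := ∑ i ∈ s, T i (y i)
  refine le_of_sq_le_mul (by positivity) ?_
  calc ‖g‖ ^ 2 = re ⟪∑ i ∈ s, T i (y i), g⟫_𝕜 := (inner_self_eq_norm_sq g).symm
    _ = ∑ i ∈ s, re ⟪y i, T i g⟫_𝕜 := by simp only [sum_inner, map_sum, hT _ _ g]
    _ ≤ ∑ i ∈ s, ‖y i‖ * ‖T i g‖ := sum_le_sum fun i _ => re_inner_le_norm _ _
    _ ≤ √(∑ i ∈ s, ‖y i‖ ^ 2) * √(∑ i ∈ s, ‖T i g‖ ^ 2) := Real.sum_mul_le_sqrt_mul_sqrt _ _ _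
    _ ≤ √(∑ i ∈ s, ‖y i‖ ^ 2) * (√B * ‖g‖) := by gcongr; exact sqrt_sum_norm_apply_sq_le hB g s
    _ = √B * √(∑ i ∈ s, ‖y i‖ ^ 2) * ‖g‖ := by ring

variable {T S : ι → E →ₗ[𝕜] E} {BT BS l₁ l₂ m : ℝ}

theorem re_inner_sum_sub_eq_sum_norm_sq (hT : ∀ i, (T i).IsSymmetric)
    (hS : ∀ i, (S i).IsSymmetric) (f : E) (s : Finset ι) :
    re ⟪∑ i ∈ s, T i (T i f - S i f) - ∑ i ∈ s, S i (T i f - S i f), f⟫_𝕜 =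
      ∑ i ∈ s, ‖T i f - S i f‖ ^ 2 := by
  rw [← sum_sub_distrib, sum_inner, map_sum]
  refine sum_congr rfl fun i _ => ?_
  rw [inner_sub_left, hT, hS, ← inner_sub_right, inner_self_eq_norm_sq]

theorem sqrt_sum_norm_sub_sq_le_of_perturbation (hT : ∀ i, (T i).IsSymmetric)
    (hS : ∀ i, (S i).IsSymmetric)
    (hBT : ∀ (g : E) (s : Finset ι), ∑ i ∈ s, ‖T i g‖ ^ 2 ≤ BT * ‖g‖ ^ 2)
    (hBS : ∀ (g : E) (s : Finset ι), ∑ i ∈ s, ‖S i g‖ ^ 2 ≤ BS * ‖g‖ ^ 2)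
    (hl₁ : 0 ≤ l₁) (hl₂ : 0 ≤ l₂) (hm : 0 ≤ m)
    (hpert : ∀ (s : Finset ι) (y : ι → E),
      ‖∑ i ∈ s, T i (y i) - ∑ i ∈ s, S i (y i)‖ ≤
        l₁ * ‖∑ i ∈ s, T i (y i)‖ + l₂ * ‖∑ i ∈ s, S i (y i)‖ + m * √(∑ i ∈ s, ‖y i‖ ^ 2))
    (f : E) (s : Finset ι) :
    √(∑ i ∈ s, ‖T i f - S i f‖ ^ 2) ≤ (l₁ * √BT + l₂ * √BS + m) * ‖f‖ := by
  set y := fun i => T i f - S i f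
  set r := √(∑ i ∈ s, ‖y i‖ ^ 2)
  refine le_of_sq_le_mul (by positivity) ?_
  calc r ^ 2 = re ⟪∑ i ∈ s, T i (y i) - ∑ i ∈ s, S i (y i), f⟫_𝕜 := by
        rw [Real.sq_sqrt (by positivity), re_inner_sum_sub_eq_sum_norm_sq hT hS]
    _ ≤ ‖∑ i ∈ s, T i (y i) - ∑ i ∈ s, S i (y i)‖ * ‖f‖ := re_inner_le_norm _ _
    _ ≤ (l₁ * ‖∑ i ∈ s, T i (y i)‖ + l₂ * ‖∑ i ∈ s, S i (y i)‖ + m * r) * ‖f‖ := by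
        gcongr; exact hpert s y
    _ ≤ (l₁ * (√BT * r) + l₂ * (√BS * r) + m * r) * ‖f‖ := by
        gcongr
        · exact norm_sum_apply_le_of_isSymmetric hT hBT s y
        · exact norm_sum_apply_le_of_isSymmetric hS hBS s y
    _ = (l₁ * √BT + l₂ * √BS + m) * ‖f‖ * r := by ring

theorem sum_norm_sq_sub_norm_sq_le_of_perturbation (hT : ∀ i, (T i).IsSymmetric)
    (hS : ∀ i, (S i).IsSymmetric)
    (hBT : ∀ (g : E) (s : Finset ι), ∑ i ∈ s, ‖T i g‖ ^ 2 ≤ BT * ‖g‖ ^ 2)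
    (hBS : ∀ (g : E) (s : Finset ι), ∑ i ∈ s, ‖S i g‖ ^ 2 ≤ BS * ‖g‖ ^ 2)
    (hl₁ : 0 ≤ l₁) (hl₂ : 0 ≤ l₂) (hm : 0 ≤ m)
    (hpert : ∀ (s : Finset ι) (y : ι → E),
      ‖∑ i ∈ s, T i (y i) - ∑ i ∈ s, S i (y i)‖ ≤
        l₁ * ‖∑ i ∈ s, T i (y i)‖ + l₂ * ‖∑ i ∈ s, S i (y i)‖ + m * √(∑ i ∈ s, ‖y i‖ ^ 2))
    (f : E) (s : Finset ι) :
    ∑ i ∈ s, (‖T i f‖ ^ 2 - ‖S i f‖ ^ 2) ≤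
      (l₁ * √BT + l₂ * √BS + m) * (√BT + √BS) * ‖f‖ ^ 2 :=
  calc ∑ i ∈ s, (‖T i f‖ ^ 2 - ‖S i f‖ ^ 2)
      ≤ √(∑ i ∈ s, ‖T i f - S i f‖ ^ 2) *
          (√(∑ i ∈ s, ‖T i f‖ ^ 2) + √(∑ i ∈ s, ‖S i f‖ ^ 2)) :=
        sum_norm_sq_sub_norm_sq_le s _ _
    _ ≤ (l₁ * √BT + l₂ * √BS + m) * ‖f‖ * (√BT * ‖f‖ + √BS * ‖f‖) := by
        gcongr
        · exact sqrt_sum_norm_sub_sq_le_of_perturbation hT hS hBT hBS hl₁ hl₂ hm hpert f s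
        · exact sqrt_sum_norm_apply_sq_le hBT f s
        · exact sqrt_sum_norm_apply_sq_le hBS f s
    _ = _ := by ring

end SymmetricFamilies

namespace Submodule

variable {𝕜 E : Type*} [RCLike 𝕜] [NormedAddCommGroup E] [InnerProductSpace 𝕜 E]
  (U : Submodule 𝕜 E) [U.HasOrthogonalProjection] (w : ℝ)

noncomputable def weightedStarProjection : E →ₗ[𝕜] E :=
  (w : 𝕜) • (U.starProjection : E →ₗ[𝕜] E)

theorem weightedStarProjection_apply (x : E) :
    U.weightedStarProjection w x = (w : 𝕜) • (U.orthogonalProjectionOnto x : E) :=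
  rfl

theorem isSymmetric_weightedStarProjection : (U.weightedStarProjection w).IsSymmetric :=
  U.starProjection_isSymmetric.smul (RCLike.conj_ofReal w)

theorem norm_weightedStarProjection_apply_sq (x : E) :
    ‖U.weightedStarProjection w x‖ ^ 2 = w ^ 2 * ‖(U.orthogonalProjectionOnto x : E)‖ ^ 2 := by
  rw [weightedStarProjection_apply, norm_smul, mul_pow, RCLike.norm_ofReal, sq_abs]

end Submodule

namespace lp

variable {ι E : Type*} [DecidableEq ι] [NormedAddCommGroup E]

theorem tsum_apply_sum_single {𝕜 : Type*} [RCLike 𝕜] [NormedSpace 𝕜 E] {p : ENNReal}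
    [Fact (1 ≤ p)] (T : ι → E →ₗ[𝕜] E) (s : Finset ι) (y : ι → E) :
    ∑' j, T j ((∑ i ∈ s, lp.single p i (y i) : lp (fun _ : ι => E) p) j) = ∑ i ∈ s, T i (y i) := by
  have hsum (j : ι) : (∑ i ∈ s, lp.single p i (y i) : lp (fun _ : ι => E) p) j =
      if j ∈ s then y j else 0 := by
    simp only [lp.coeFn_sum, Finset.sum_apply, lp.single_apply, Pi.single_apply, sum_ite_eq]
  rw [tsum_eq_sum (s := s) fun j hj => by rw [hsum, if_neg hj, map_zero]]
  exact sum_congr rfl fun i hi => by rw [hsum, if_pos hi]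

theorem norm_sum_single_two (s : Finset ι) (y : ι → E) :
    ‖(∑ i ∈ s, lp.single 2 i (y i) : lp (fun _ : ι => E) 2)‖ = √(∑ i ∈ s, ‖y i‖ ^ 2) := by
  have h := lp.norm_sum_single (p := 2) (E := fun _ : ι => E) (by norm_num) y s
  simp only [ENNReal.toReal_ofNat, Real.rpow_two] at h
  rw [← h, Real.sqrt_sq (norm_nonneg _)]

end lp

theorem woven_fusion_frames_of_synthesis_perturbation_general
    {H : Type*} [NormedAddCommGroup H] [InnerProductSpace ℂ H]
    {I : Type*}
    (W V : I → Submodule ℂ H) [∀ i, CompleteSpace (W i)] [∀ i, CompleteSpace (V i)]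
    (ν μ : I → ℝ)
    (AW BW AV BV : ℝ) (hAW : 0 < AW) (hAV : 0 < AV)
    (hW : ∀ f : H,
      AW * ‖f‖ ^ 2 ≤ ∑' i : I, ν i ^ 2 * ‖(Submodule.orthogonalProjection (W i) f : H)‖ ^ 2 ∧
      ∑' i : I, ν i ^ 2 * ‖(Submodule.orthogonalProjection (W i) f : H)‖ ^ 2 ≤ BW * ‖f‖ ^ 2)
    (hV : ∀ f : H,
      AV * ‖f‖ ^ 2 ≤ ∑' i : I, μ i ^ 2 * ‖(Submodule.orthogonalProjection (V i) f : H)‖ ^ 2 ∧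
      ∑' i : I, μ i ^ 2 * ‖(Submodule.orthogonalProjection (V i) f : H)‖ ^ 2 ≤ BV * ‖f‖ ^ 2)
    (TW TV : lp (fun _ : I => H) 2 →L[ℂ] H)
    (hTW : ∀ h : lp (fun _ : I => H) 2,
      TW h = ∑' i : I, ν i • (Submodule.orthogonalProjection (W i) (h i) : H))
    (hTV : ∀ h : lp (fun _ : I => H) 2,
      TV h = ∑' i : I, μ i • (Submodule.orthogonalProjection (V i) (h i) : H))
    (lam₁ lam₂ mu : ℝ)
    (hlam₁ : 0 < lam₁) (hlam₂ : 0 < lam₂)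
    (hmu : 0 < mu)
    (hmain : (2 / AW) * (Real.sqrt BW + Real.sqrt BV) *
      (lam₁ * Real.sqrt BW + lam₂ * Real.sqrt BV + mu) ≤ 1)
    (hpert : ∀ h : lp (fun _ : I => H) 2,
      ‖TW h - TV h‖ ≤ lam₁ * ‖TW h‖ + lam₂ * ‖TV h‖ + mu * ‖h‖) :
    ∀ σ : Set I, ∀ f : H,
      (AW / 2) * ‖f‖ ^ 2 ≤
        (∑' i : σ, ν (i : I) ^ 2 * ‖(Submodule.orthogonalProjection (W (i : I)) f : H)‖ ^ 2) +
          (∑' i : ↥σᶜ, μ (i : I) ^ 2 * ‖(Submodule.orthogonalProjection (V (i : I)) f : H)‖ ^ 2) ∧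
      (∑' i : σ, ν (i : I) ^ 2 * ‖(Submodule.orthogonalProjection (W (i : I)) f : H)‖ ^ 2) +
          (∑' i : ↥σᶜ, μ (i : I) ^ 2 * ‖(Submodule.orthogonalProjection (V (i : I)) f : H)‖ ^ 2) ≤
        (BW + BV) * ‖f‖ ^ 2 := by
  intro σ f
  simp only [← Submodule.norm_weightedStarProjection_apply_sq] at hW hV ⊢
  set T := fun i => (W i).weightedStarProjection (ν i)
  set S := fun i => (V i).weightedStarProjection (μ i)
  have hTW' (h : lp (fun _ : I => H) 2) : TW h = ∑' i, T i (h i) := hTW h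
  have hTV' (h : lp (fun _ : I => H) 2) : TV h = ∑' i, S i (h i) := hTV h
  have hsW g := summable_norm_apply_sq_of_le_tsum T hAW (hW g).1
  have hsV g := summable_norm_apply_sq_of_le_tsum S hAV (hV g).1
  have hBW (g : H) (s : Finset I) : ∑ i ∈ s, ‖T i g‖ ^ 2 ≤ BW * ‖g‖ ^ 2 :=
    ((hsW g).sum_le_tsum s fun _ _ => by positivity).trans (hW g).2
  have hBV (g : H) (s : Finset I) : ∑ i ∈ s, ‖S i g‖ ^ 2 ≤ BV * ‖g‖ ^ 2 :=
    ((hsV g).sum_le_tsum s fun _ _ => by positivity).trans (hV g).2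
  classical
  have hpert' (s : Finset I) (y : I → H) := by
    simpa only [hTW', hTV', lp.tsum_apply_sum_single, lp.norm_sum_single_two]
      using hpert (∑ i ∈ s, lp.single 2 i (y i))
  have hε : (lam₁ * √BW + lam₂ * √BV + mu) * (√BW + √BV) ≤ AW / 2 := by
    field_simp at hmain
    linarith
  have hdiff (s : Finset I) : ∑ i ∈ s, (‖T i f‖ ^ 2 - ‖S i f‖ ^ 2) ≤ AW / 2 * ‖f‖ ^ 2 :=
    (sum_norm_sq_sub_norm_sq_le_of_perturbation
      (fun i => (W i).isSymmetric_weightedStarProjection (ν i))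
      (fun i => (V i).isSymmetric_weightedStarProjection (μ i)) hBW hBV hlam₁.le hlam₂.le
      hmu.le hpert' f s).trans (by gcongr)
  constructor
  · linarith [(hsW f).sub_le_tsum_subtype_add_tsum_compl (hsV f) hdiff σ, (hW f).1]
  · linarith [(hsW f).tsum_subtype_add_tsum_compl_le (hsV f) (fun _ => by positivity)
      (fun _ => by positivity) σ, (hW f).2, (hV f).2]

/-- Paley–Wiener type perturbation: if the synthesis-type operators of two fusion frames
are close, the fusion frames are woven fusion frames with universal bounds `A_W/2` and
`B_W + B_V`. -/
theorem woven_fusion_frames_of_synthesis_perturbation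
    {H : Type*} [NormedAddCommGroup H] [InnerProductSpace ℂ H] [CompleteSpace H]
    [TopologicalSpace.SeparableSpace H]
    {I : Type*} [Countable I]
    (W V : I → Submodule ℂ H) [∀ i, CompleteSpace (W i)] [∀ i, CompleteSpace (V i)]
    (ν μ : I → ℝ) (hν : ∀ i, 0 < ν i) (hμ : ∀ i, 0 < μ i)
    (AW BW AV BV : ℝ) (hAW : 0 < AW) (hBW : 0 < BW) (hAV : 0 < AV) (hBV : 0 < BV)
    (hW : ∀ f : H,
      AW * ‖f‖ ^ 2 ≤ ∑' i : I, ν i ^ 2 * ‖(Submodule.orthogonalProjection (W i) f : H)‖ ^ 2 ∧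
      ∑' i : I, ν i ^ 2 * ‖(Submodule.orthogonalProjection (W i) f : H)‖ ^ 2 ≤ BW * ‖f‖ ^ 2)
    (hV : ∀ f : H,
      AV * ‖f‖ ^ 2 ≤ ∑' i : I, μ i ^ 2 * ‖(Submodule.orthogonalProjection (V i) f : H)‖ ^ 2 ∧
      ∑' i : I, μ i ^ 2 * ‖(Submodule.orthogonalProjection (V i) f : H)‖ ^ 2 ≤ BV * ‖f‖ ^ 2)
    (TW TV : lp (fun _ : I => H) 2 →L[ℂ] H)
    (hTW : ∀ h : lp (fun _ : I => H) 2,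
      TW h = ∑' i : I, ν i • (Submodule.orthogonalProjection (W i) (h i) : H))
    (hTV : ∀ h : lp (fun _ : I => H) 2,
      TV h = ∑' i : I, μ i • (Submodule.orthogonalProjection (V i) (h i) : H))
    (lam₁ lam₂ mu : ℝ)
    (hlam₁ : 0 < lam₁) (hlam₁' : lam₁ < 1) (hlam₂ : 0 < lam₂) (hlam₂' : lam₂ < 1)
    (hmu : 0 < mu) (hmu' : mu < 1)
    (hmain : (2 / AW) * (Real.sqrt BW + Real.sqrt BV) *
      (lam₁ * Real.sqrt BW + lam₂ * Real.sqrt BV + mu) ≤ 1)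
    (hpert : ∀ h : lp (fun _ : I => H) 2,
      ‖TW h - TV h‖ ≤ lam₁ * ‖TW h‖ + lam₂ * ‖TV h‖ + mu * ‖h‖) :
    ∀ σ : Set I, ∀ f : H,
      (AW / 2) * ‖f‖ ^ 2 ≤
        (∑' i : σ, ν (i : I) ^ 2 * ‖(Submodule.orthogonalProjection (W (i : I)) f : H)‖ ^ 2) +
          (∑' i : ↥σᶜ, μ (i : I) ^ 2 * ‖(Submodule.orthogonalProjection (V (i : I)) f : H)‖ ^ 2) ∧
      (∑' i : σ, ν (i : I) ^ 2 * ‖(Submodule.orthogonalProjection (W (i : I)) f : H)‖ ^ 2) +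
          (∑' i : ↥σᶜ, μ (i : I) ^ 2 * ‖(Submodule.orthogonalProjection (V (i : I)) f : H)‖ ^ 2) ≤
        (BW + BV) * ‖f‖ ^ 2 :=
  woven_fusion_frames_of_synthesis_perturbation_general W V ν μ AW BW AV BV hAW hAV hW hV TW TV hTW
    hTV lam₁ lam₂ mu hlam₁ hlam₂ hmu hmain hpert
end

section
/- Let H be a separable complex Hilbert space and let {W_i}_{i∈I} and {V_i}_{i∈I} be fusion frames for H with weights {ν_i} and {μ_i} and fusion frame bounds (A_W, B_W) and (A_V, B_V) respectively. For σ ⊆ I write S_W^σ f = Σ_{i∈σ} ν_i² P_{W_i} f and S_V^σ f = Σ_{i∈σ} μ_i² P_{V_i} f. Suppose there exist constants 0 < λ, μ, γ < 1 with λ B_W + μ B_V + γ √B_W < A_W such that for every σ ⊆ I and every f ∈ H, ‖S_W^σ f − S_V^σ f‖ ≤ λ‖S_W^σ f‖ + μ‖S_V^σ f‖ + γ·(Σ_{i∈σ} ν_i² ‖P_{W_i} f‖²)^{1/2}. Then {W_i}_{i∈I} and {V_i}_{i∈I} are woven fusion frames for H with universal bounds A_W − λB_W − μB_V − γ√B_W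 and B_W + λB_W + μB_V + γ√B_W. -/
/-! Apply the perturbation hypothesis to the complement `σᶜ`. For a Bessel fusion sequence with
bound `B` the operator `S f = ∑ wᵢ² P_{Kᵢ} f` has norm at most `B` (finite partial sums are
controlled by Cauchy–Schwarz), so the hypothesis gives
`‖S_W^{σᶜ} f - S_V^{σᶜ} f‖ ≤ (λ B_W + μ B_V + γ √B_W) ‖f‖`. Since `Re ⟪f, S f⟫ = ∑ wᵢ² ‖P_{Kᵢ} f‖²`,
pairing with `f` bounds the change of the frame sum when the `W`-terms over `σᶜ` are replaced by
the `V`-terms by `(λ B_W + μ B_V + γ √B_W) ‖f‖²`, and the full `W`-frame sum lies in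
`[A_W ‖f‖², B_W ‖f‖²]`. -/

open scoped InnerProductSpace
open RCLike

section FusionFrame

variable {𝕜 E ι : Type*} [RCLike 𝕜] [NormedAddCommGroup E] [InnerProductSpace 𝕜 E]
  (K : ι → Submodule 𝕜 E) [∀ i, (K i).HasOrthogonalProjection] (w : ι → ℝ)

/-- Stated for finite partial sums, so that no summability is presupposed. -/
def IsBesselFusionSeq (B : ℝ) : Prop :=
  ∀ (F : Finset ι) (g : E), ∑ i ∈ F, w i ^ 2 * ‖(K i).starProjection g‖ ^ 2 ≤ B * ‖g‖ ^ 2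

def IsFusionFrame (A B : ℝ) : Prop :=
  ∀ g : E, A * ‖g‖ ^ 2 ≤ ∑' i, w i ^ 2 * ‖(K i).starProjection g‖ ^ 2 ∧
    ∑' i, w i ^ 2 * ‖(K i).starProjection g‖ ^ 2 ≤ B * ‖g‖ ^ 2

noncomputable def fusionFrameOp [NormedSpace ℝ E] (g : E) : E :=
  ∑' i, w i ^ 2 • (K i).starProjection g

variable {K w} {A B : ℝ}

theorem Submodule.re_inner_starProjection_le (U : Submodule 𝕜 E) [U.HasOrthogonalProjection]
    (g h : E) : re ⟪U.starProjection g, h⟫_𝕜 ≤ ‖U.starProjection g‖ * ‖U.starProjection h‖ :=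
  calc re ⟪U.starProjection g, h⟫_𝕜 = re ⟪U.starProjection g, U.starProjection h⟫_𝕜 := by
        rw [← U.inner_starProjection_left_eq_right,
          U.starProjection_eq_self_iff.mpr (U.starProjection_apply_mem g)]
    _ ≤ _ := re_inner_le_norm _ _

theorem IsFusionFrame.summable (h : IsFusionFrame K w A B) (hA : 0 < A) (g : E) :
    Summable fun i => w i ^ 2 * ‖(K i).starProjection g‖ ^ 2 := by
  rcases eq_or_ne g 0 with rfl | hg
  · simp
  by_contra hns
  have hlower := (h g).1
  rw [tsum_eq_zero_of_not_summable hns] at hlower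
  have : 0 < A * ‖g‖ ^ 2 := by positivity
  linarith

theorem IsFusionFrame.isBesselFusionSeq (h : IsFusionFrame K w A B) (hA : 0 < A) :
    IsBesselFusionSeq K w B := fun F g =>
  ((h.summable hA g).sum_le_tsum F fun i _ => by positivity).trans (h g).2

namespace IsBesselFusionSeq

theorem summable (h : IsBesselFusionSeq K w B) (g : E) :
    Summable fun i => w i ^ 2 * ‖(K i).starProjection g‖ ^ 2 :=
  summable_of_sum_le (fun i => by positivity) (h · g)

theorem tsum_le (h : IsBesselFusionSeq K w B) (g : E) :
    ∑' i, w i ^ 2 * ‖(K i).starProjection g‖ ^ 2 ≤ B * ‖g‖ ^ 2 :=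
  Real.tsum_le_of_sum_le (fun i => by positivity) (h · g)

theorem restrict (h : IsBesselFusionSeq K w B) (s : Set ι) :
    IsBesselFusionSeq (fun i : s => K i) (fun i : s => w i) B := fun F g => by
  simpa [Finset.sum_map] using h (F.map (Function.Embedding.subtype _)) g

variable [NormedSpace ℝ E] [IsScalarTower ℝ 𝕜 E]

theorem norm_sum_smul_starProjection_le (h : IsBesselFusionSeq K w B) (F : Finset ι) (g : E) :
    ‖∑ i ∈ F, w i ^ 2 • (K i).starProjection g‖ ≤
      √B * √(∑ i ∈ F, w i ^ 2 * ‖(K i).starProjection g‖ ^ 2) := by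
  set S := ∑ i ∈ F, w i ^ 2 • (K i).starProjection g
  have expand (y : E) :
      re ⟪S, y⟫_𝕜 = ∑ i ∈ F, w i ^ 2 * re ⟪(K i).starProjection g, y⟫_𝕜 := by
    simp only [S, sum_inner, map_sum, real_smul_eq_coe_smul (K := 𝕜), inner_smul_left,
      conj_ofReal, re_ofReal_mul]
  -- Cauchy–Schwarz, then the Bessel bound applied to `S` itself.
  have hS : ‖S‖ ^ 2 ≤ √(∑ i ∈ F, w i ^ 2 * ‖(K i).starProjection g‖ ^ 2) * (√B * ‖S‖) :=
    calc ‖S‖ ^ 2 = re ⟪S, S⟫_𝕜 := (inner_self_eq_norm_sq S).symm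
      _ = ∑ i ∈ F, w i ^ 2 * re ⟪(K i).starProjection g, S⟫_𝕜 := expand S
      _ ≤ ∑ i ∈ F, (w i * ‖(K i).starProjection g‖) * (w i * ‖(K i).starProjection S‖) :=
        Finset.sum_le_sum fun i _ => by
          rw [mul_mul_mul_comm, ← sq]
          exact mul_le_mul_of_nonneg_left ((K i).re_inner_starProjection_le g S) (sq_nonneg _)
      _ ≤ √(∑ i ∈ F, (w i * ‖(K i).starProjection g‖) ^ 2) *
            √(∑ i ∈ F, (w i * ‖(K i).starProjection S‖) ^ 2) :=
        Real.sum_mul_le_sqrt_mul_sqrt _ _ _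
      _ ≤ √(∑ i ∈ F, w i ^ 2 * ‖(K i).starProjection g‖ ^ 2) * √(B * ‖S‖ ^ 2) := by
        simp_rw [mul_pow]
        gcongr
        exact h F S
      _ = _ := by rw [Real.sqrt_mul' _ (sq_nonneg _), Real.sqrt_sq (norm_nonneg _)]
  rcases (norm_nonneg S).eq_or_lt with hS0 | hS0
  · rw [← hS0]; positivity
  · nlinarith

variable [CompleteSpace E]

theorem summable_smul_starProjection (h : IsBesselFusionSeq K w B) (g : E) :
    Summable fun i => w i ^ 2 • (K i).starProjection g := by
  refine summable_iff_vanishing_norm.2 fun ε hε => ?_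
  obtain ⟨s, hs⟩ :=
    summable_iff_vanishing_norm.1 (h.summable g) ((ε / (√B + 1)) ^ 2) (by positivity)
  refine ⟨s, fun t ht => ?_⟩
  have hc : √(∑ i ∈ t, w i ^ 2 * ‖(K i).starProjection g‖ ^ 2) < ε / (√B + 1) :=
    (Real.sqrt_lt' (by positivity)).2 ((le_abs_self _).trans_lt (hs t ht))
  calc ‖∑ i ∈ t, w i ^ 2 • (K i).starProjection g‖
      ≤ √B * √(∑ i ∈ t, w i ^ 2 * ‖(K i).starProjection g‖ ^ 2) :=
        h.norm_sum_smul_starProjection_le t g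
    _ ≤ (√B + 1) * √(∑ i ∈ t, w i ^ 2 * ‖(K i).starProjection g‖ ^ 2) := by gcongr; linarith
    _ < (√B + 1) * (ε / (√B + 1)) := by gcongr
    _ = ε := by field_simp

theorem norm_fusionFrameOp_le (h : IsBesselFusionSeq K w B) (hB : 0 ≤ B) (g : E) :
    ‖fusionFrameOp K w g‖ ≤ B * ‖g‖ := by
  refine le_of_tendsto' (h.summable_smul_starProjection g).hasSum.norm fun F => ?_
  calc ‖∑ i ∈ F, w i ^ 2 • (K i).starProjection g‖
      ≤ √B * √(∑ i ∈ F, w i ^ 2 * ‖(K i).starProjection g‖ ^ 2) :=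
        h.norm_sum_smul_starProjection_le F g
    _ ≤ √B * √(B * ‖g‖ ^ 2) := by gcongr; exact h F g
    _ = B * ‖g‖ := by
      rw [Real.sqrt_mul hB, Real.sqrt_sq (norm_nonneg g), ← mul_assoc, Real.mul_self_sqrt hB]

theorem re_inner_fusionFrameOp (h : IsBesselFusionSeq K w B) (g : E) :
    re ⟪g, fusionFrameOp K w g⟫_𝕜 = ∑' i, w i ^ 2 * ‖(K i).starProjection g‖ ^ 2 := by
  have hterm (i : ι) :
      re ⟪g, w i ^ 2 • (K i).starProjection g⟫_𝕜 = w i ^ 2 * ‖(K i).starProjection g‖ ^ 2 := by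
    rw [real_smul_eq_coe_smul (K := 𝕜), inner_smul_right, re_ofReal_mul, inner_re_symm,
      Submodule.re_inner_starProjection_eq_normSq, Submodule.coe_norm,
      Submodule.coe_orthogonalProjectionOnto_apply]
  have hsum := ((h.summable_smul_starProjection g).hasSum.mapL (innerSL 𝕜 g)).mapL reCLM
  simp only [innerSL_apply_apply, reCLM_apply, hterm] at hsum
  exact hsum.tsum_eq.symm

theorem abs_tsum_sub_tsum_le_of_norm_fusionFrameOp_sub_le {L : ι → Submodule 𝕜 E}
    [∀ i, (L i).HasOrthogonalProjection] {v : ι → ℝ} {C lam mu gam : ℝ}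
    (hK : IsBesselFusionSeq K w B) (hL : IsBesselFusionSeq L v C) (hB : 0 ≤ B) (hC : 0 ≤ C)
    (hlam : 0 ≤ lam) (hmu : 0 ≤ mu) (hgam : 0 ≤ gam) (g : E)
    (hpert : ‖fusionFrameOp K w g - fusionFrameOp L v g‖ ≤
      lam * ‖fusionFrameOp K w g‖ + mu * ‖fusionFrameOp L v g‖ +
        gam * √(∑' i, w i ^ 2 * ‖(K i).starProjection g‖ ^ 2)) :
    |∑' i, v i ^ 2 * ‖(L i).starProjection g‖ ^ 2 - ∑' i, w i ^ 2 * ‖(K i).starProjection g‖ ^ 2|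
      ≤ (lam * B + mu * C + gam * √B) * ‖g‖ ^ 2 := by
  have hdiff :
      ‖fusionFrameOp K w g - fusionFrameOp L v g‖ ≤ (lam * B + mu * C + gam * √B) * ‖g‖ :=
    calc _ ≤ _ := hpert
      _ ≤ lam * (B * ‖g‖) + mu * (C * ‖g‖) + gam * √(B * ‖g‖ ^ 2) := by
        gcongr
        · exact hK.norm_fusionFrameOp_le hB g
        · exact hL.norm_fusionFrameOp_le hC g
        · exact hK.tsum_le g
      _ = (lam * B + mu * C + gam * √B) * ‖g‖ := by
        rw [Real.sqrt_mul hB, Real.sqrt_sq (norm_nonneg g)]; ring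
  calc _ = |re ⟪g, fusionFrameOp L v g - fusionFrameOp K w g⟫_𝕜| := by
        rw [inner_sub_right, map_sub, hK.re_inner_fusionFrameOp, hL.re_inner_fusionFrameOp]
    _ ≤ ‖g‖ * ‖fusionFrameOp K w g - fusionFrameOp L v g‖ := by
        rw [norm_sub_rev]; exact (abs_re_le_norm _).trans (norm_inner_le_norm _ _)
    _ ≤ ‖g‖ * ((lam * B + mu * C + gam * √B) * ‖g‖) := by gcongr
    _ = _ := by ring

end IsBesselFusionSeq

end FusionFrame

theorem woven_fusion_frames_of_partial_frame_operator_perturbation_general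
    {H : Type*} [NormedAddCommGroup H] [InnerProductSpace ℂ H] [CompleteSpace H]
    {I : Type*} (W V : I → Submodule ℂ H) [∀ i, CompleteSpace (W i)] [∀ i, CompleteSpace (V i)]
    (ν μ : I → ℝ) (AW BW AV BV : ℝ) (hAW : 0 < AW) (hBW : 0 < BW) (hAV : 0 < AV) (hBV : 0 < BV)
    (hW : ∀ f : H,
      AW * ‖f‖ ^ 2 ≤ ∑' i : I, ν i ^ 2 * ‖(Submodule.orthogonalProjectionOnto (W i) f : H)‖ ^ 2 ∧
      ∑' i : I, ν i ^ 2 * ‖(Submodule.orthogonalProjectionOnto (W i) f : H)‖ ^ 2 ≤ BW * ‖f‖ ^ 2)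
    (hV : ∀ f : H,
      AV * ‖f‖ ^ 2 ≤ ∑' i : I, μ i ^ 2 * ‖(Submodule.orthogonalProjectionOnto (V i) f : H)‖ ^ 2 ∧
      ∑' i : I, μ i ^ 2 * ‖(Submodule.orthogonalProjectionOnto (V i) f : H)‖ ^ 2 ≤ BV * ‖f‖ ^ 2)
    (lam mu gam : ℝ)
    (hlam : 0 < lam) (hmu : 0 < mu) (hgam : 0 < gam)
    (hpert : ∀ σ : Set I, ∀ f : H,
      ‖(∑' i : σ, ν (i : I) ^ 2 • (Submodule.orthogonalProjectionOnto (W (i : I)) f : H)) -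
          (∑' i : σ, μ (i : I) ^ 2 • (Submodule.orthogonalProjectionOnto (V (i : I)) f : H))‖ ≤
        lam * ‖∑' i : σ, ν (i : I) ^ 2 • (Submodule.orthogonalProjectionOnto (W (i : I)) f : H)‖ +
          mu * ‖∑' i : σ, μ (i : I) ^ 2 • (Submodule.orthogonalProjectionOnto (V (i : I)) f : H)‖ +
          gam * Real.sqrt (∑' i : σ, ν (i : I) ^ 2 * ‖(Submodule.orthogonalProjectionOnto (W (i : I)) f : H)‖ ^ 2)) :
    ∀ σ : Set I, ∀ f : H,
      (AW - lam * BW - mu * BV - gam * Real.sqrt BW) * ‖f‖ ^ 2 ≤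
        (∑' i : σ, ν (i : I) ^ 2 * ‖(Submodule.orthogonalProjectionOnto (W (i : I)) f : H)‖ ^ 2) +
          (∑' i : ↥σᶜ, μ (i : I) ^ 2 * ‖(Submodule.orthogonalProjectionOnto (V (i : I)) f : H)‖ ^ 2) ∧
      (∑' i : σ, ν (i : I) ^ 2 * ‖(Submodule.orthogonalProjectionOnto (W (i : I)) f : H)‖ ^ 2) +
          (∑' i : ↥σᶜ, μ (i : I) ^ 2 * ‖(Submodule.orthogonalProjectionOnto (V (i : I)) f : H)‖ ^ 2) ≤
        (BW + lam * BW + mu * BV + gam * Real.sqrt BW) * ‖f‖ ^ 2 := by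
  simp only [Submodule.coe_orthogonalProjectionOnto_apply] at hW hV hpert ⊢
  intro σ f
  have hWB := IsFusionFrame.isBesselFusionSeq (K := W) (w := ν) hW hAW
  have hVB := IsFusionFrame.isBesselFusionSeq (K := V) (w := μ) hV hAV
  have hdiff := (hWB.restrict σᶜ).abs_tsum_sub_tsum_le_of_norm_fusionFrameOp_sub_le
    (hVB.restrict σᶜ) hBW.le hBV.le hlam.le hmu.le hgam.le f (hpert σᶜ f)
  have hsplit := (hWB.summable f).tsum_subtype_add_tsum_subtype_compl σ
  have hframe := hW f
  constructor <;> linarith [abs_le.1 hdiff]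

/-- Perturbation of partial fusion frame operators: if `‖S_W^σ f − S_V^σ f‖` is controlled
by `λ‖S_W^σ f‖ + μ‖S_V^σ f‖ + γ(Σ_{i∈σ} ν_i²‖P_{W_i}f‖²)^{1/2}` with
`λB_W + μB_V + γ√B_W < A_W`, then the fusion frames are woven fusion frames. -/
theorem woven_fusion_frames_of_partial_frame_operator_perturbation
    {H : Type*} [NormedAddCommGroup H] [InnerProductSpace ℂ H] [CompleteSpace H]
    [TopologicalSpace.SeparableSpace H]
    {I : Type*} [Countable I]
    (W V : I → Submodule ℂ H) [∀ i, CompleteSpace (W i)] [∀ i, CompleteSpace (V i)]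
    (ν μ : I → ℝ) (hν : ∀ i, 0 < ν i) (hμ : ∀ i, 0 < μ i)
    (AW BW AV BV : ℝ) (hAW : 0 < AW) (hBW : 0 < BW) (hAV : 0 < AV) (hBV : 0 < BV)
    (hW : ∀ f : H,
      AW * ‖f‖ ^ 2 ≤ ∑' i : I, ν i ^ 2 * ‖(Submodule.orthogonalProjectionOnto (W i) f : H)‖ ^ 2 ∧
      ∑' i : I, ν i ^ 2 * ‖(Submodule.orthogonalProjectionOnto (W i) f : H)‖ ^ 2 ≤ BW * ‖f‖ ^ 2)
    (hV : ∀ f : H,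
      AV * ‖f‖ ^ 2 ≤ ∑' i : I, μ i ^ 2 * ‖(Submodule.orthogonalProjectionOnto (V i) f : H)‖ ^ 2 ∧
      ∑' i : I, μ i ^ 2 * ‖(Submodule.orthogonalProjectionOnto (V i) f : H)‖ ^ 2 ≤ BV * ‖f‖ ^ 2)
    (lam mu gam : ℝ)
    (hlam : 0 < lam) (hlam' : lam < 1) (hmu : 0 < mu) (hmu' : mu < 1)
    (hgam : 0 < gam) (hgam' : gam < 1)
    (hmain : lam * BW + mu * BV + gam * Real.sqrt BW < AW)
    (hpert : ∀ σ : Set I, ∀ f : H,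
      ‖(∑' i : σ, ν (i : I) ^ 2 • (Submodule.orthogonalProjectionOnto (W (i : I)) f : H)) -
          (∑' i : σ, μ (i : I) ^ 2 • (Submodule.orthogonalProjectionOnto (V (i : I)) f : H))‖ ≤
        lam * ‖∑' i : σ, ν (i : I) ^ 2 • (Submodule.orthogonalProjectionOnto (W (i : I)) f : H)‖ +
          mu * ‖∑' i : σ, μ (i : I) ^ 2 • (Submodule.orthogonalProjectionOnto (V (i : I)) f : H)‖ +
          gam * Real.sqrt (∑' i : σ, ν (i : I) ^ 2 * ‖(Submodule.orthogonalProjectionOnto (W (i : I)) f : H)‖ ^ 2)) :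
    ∀ σ : Set I, ∀ f : H,
      (AW - lam * BW - mu * BV - gam * Real.sqrt BW) * ‖f‖ ^ 2 ≤
        (∑' i : σ, ν (i : I) ^ 2 * ‖(Submodule.orthogonalProjectionOnto (W (i : I)) f : H)‖ ^ 2) +
          (∑' i : ↥σᶜ, μ (i : I) ^ 2 * ‖(Submodule.orthogonalProjectionOnto (V (i : I)) f : H)‖ ^ 2) ∧
      (∑' i : σ, ν (i : I) ^ 2 * ‖(Submodule.orthogonalProjectionOnto (W (i : I)) f : H)‖ ^ 2) +
          (∑' i : ↥σᶜ, μ (i : I) ^ 2 * ‖(Submodule.orthogonalProjectionOnto (V (i : I)) f : H)‖ ^ 2) ≤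
        (BW + lam * BW + mu * BV + gam * Real.sqrt BW) * ‖f‖ ^ 2 :=
  woven_fusion_frames_of_partial_frame_operator_perturbation_general W V ν μ AW BW AV BV hAW hBW hAV
    hBV hW hV lam mu gam hlam hmu hgam hpert
end
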